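/- arXiv:1203.3928 — 9 statements merged into one kernel-verified Lean document; each statement's English description precedes it below -/
import Mathlib

section
/- The generalized Cantor ladder C is continuous, nondecreasing on [0,1], and satisfies C(0)=0 and C(1)=1. -/
open Set Finset

/-!
The values at `0` and `1` are fixed points of the self-similarity relations. The bounds
`0 ≤ C ≤ 1`, monotonicity and the density of `C '' [0,1]` in `[0,1]` each say that a bounded
defect vanishes: `max (-C t) (C t - 1)`, `C t - C s` for `t ≤ s`, and the distance from `y` to the
image of `C`. By self-similarity the defect at a point is at most `ρ_k ≤ r := max ρ_k < 1` times
the defect at a rescaled point, so its supremum `D` satisfies `D ≤ r D`, i.e. `D ≤ 0`. Continuity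
follows because a monotone function whose image is dense in `[C 0, C 1]` has no jumps.
-/

theorem nonpos_of_forall_exists_le_mul {X : Type*} {f : X → ℝ} {r : ℝ} (hr : r < 1)
    (hf : BddAbove (Set.range f)) (h : ∀ x, ∃ y, ∃ c ∈ Set.Icc 0 r, f x ≤ c * f y)
    (x : X) : f x ≤ 0 := by
  by_contra! hx
  have : Nonempty X := ⟨x⟩
  have hpos : 0 < ⨆ x, f x := hx.trans_le (le_ciSup hf x)
  have hle : ⨆ x, f x ≤ r * ⨆ x, f x := ciSup_le fun z => by
    obtain ⟨y, c, ⟨hc0, hcr⟩, hz⟩ := h z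
    calc f z ≤ c * f y := hz
      _ ≤ c * ⨆ x, f x := mul_le_mul_of_nonneg_left (le_ciSup hf y) hc0
      _ ≤ r * ⨆ x, f x := mul_le_mul_of_nonneg_right hcr hpos.le
  nlinarith

theorem exists_apply_le_and_le_apply_succ {α : Type*} [LinearOrder α] {u : ℕ → α} {x : α}
    {n : ℕ} (hn : 0 < n) (h0 : u 0 ≤ x) (hx : x ≤ u n) :
    ∃ k < n, u k ≤ x ∧ x ≤ u (k + 1) := by
  induction n with
  | zero => omega
  | succ n ih =>
    by_cases hxn : u n ≤ x
    · exact ⟨n, n.lt_succ_self, hxn, hx⟩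
    · obtain ⟨k, hk, hxk⟩ := ih (Nat.pos_of_ne_zero fun h => hxn (h ▸ h0)) (le_of_not_ge hxn)
      exact ⟨k, hk.trans n.lt_succ_self, hxk⟩

theorem MonotoneOn.continuousOn_Icc_of_Icc_subset_closure_image {f : ℝ → ℝ} {a b : ℝ}
    (hab : a ≤ b) (hf : MonotoneOn f (Set.Icc a b))
    (hdense : Set.Icc (f a) (f b) ⊆ closure (f '' Set.Icc a b)) :
    ContinuousOn f (Set.Icc a b) := by
  -- a monotone extension of `f` to `ℝ` with dense range
  set g : ℝ → ℝ := fun x => f (projIcc a b hab x) + min (x - a) 0 + max (x - b) 0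
  have hg_mono : Monotone g := fun x y hxy => by
    have := hf (projIcc a b hab x).2 (projIcc a b hab y).2 (monotone_projIcc hab hxy)
    have := min_le_min_right 0 (sub_le_sub_right hxy a)
    have := max_le_max_right 0 (sub_le_sub_right hxy b)
    simp only [g]
    linarith
  have hg_eq : Set.EqOn f g (Set.Icc a b) := fun x hx => by
    simp [g, projIcc_of_mem hab hx, hx.1, hx.2]
  have hg_dense : DenseRange g := by
    intro y
    rcases le_or_gt y (f a) with hya | hya
    · refine subset_closure ⟨a + (y - f a), ?_⟩
      simp [g, projIcc_of_le_left hab (by linarith : a + (y - f a) ≤ a), hya,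
        (by linarith : a + (y - f a) ≤ b)]
    rcases le_or_gt (f b) y with hyb | hyb
    · refine subset_closure ⟨b + (y - f b), ?_⟩
      simp [g, projIcc_of_right_le hab (by linarith : b ≤ b + (y - f b)), hyb,
        (by linarith : a ≤ b + (y - f b))]
    · refine closure_mono ?_ (hdense ⟨hya.le, hyb.le⟩)
      rw [hg_eq.image_eq]
      exact image_subset_range g _
  exact (hg_mono.continuous_of_denseRange hg_dense).continuousOn.congr hg_eq

structure IsCantorLadder (m : ℕ) (a b ρ : ℕ → ℝ) (C : ℝ → ℝ) : Prop where
  two_le : 2 ≤ m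
  a_zero : a 0 = 0
  b_last : b (m - 1) = 1
  a_lt_b : ∀ k < m, a k < b k
  b_le_a_succ : ∀ k, k + 1 < m → b k ≤ a (k + 1)
  weight_pos : ∀ k < m, 0 < ρ k
  sum_weight : ∑ k ∈ Finset.range m, ρ k = 1
  bddOn : ∃ M : ℝ, ∀ t ∈ Set.Icc (0:ℝ) 1, |C t| ≤ M
  eq_on_step : ∀ k < m, ∀ t ∈ Set.Icc (a k) (b k),
    C t = (∑ j ∈ Finset.range k, ρ j) + ρ k * C ((t - a k) / (b k - a k))
  eq_on_gap : ∀ k, k + 1 < m → ∀ t ∈ Set.Icc (b k) (a (k + 1)),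
    C t = ∑ j ∈ Finset.range (k + 1), ρ j

/-- The index `k` of the piece `[a k, a (k + 1))`, a step followed by a gap, that contains `t`;
the last piece is `[a (m - 1), 1]`. -/
noncomputable def pieceIndex (a : ℕ → ℝ) (m : ℕ) (t : ℝ) : ℕ :=
  Nat.findGreatest (fun j => a j ≤ t) (m - 1)

/-- Clamped at `1`, so that, as `C 1 = 1`, the relation on a step extends to the gap after it. -/
noncomputable def pieceCoord (a b : ℕ → ℝ) (k : ℕ) (t : ℝ) : ℝ :=
  min 1 ((t - a k) / (b k - a k))

theorem pieceIndex_mono {a : ℕ → ℝ} {m : ℕ} : Monotone (pieceIndex a m) :=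
  fun _ _ hts => Nat.findGreatest_mono_left (fun _ hj => hj.trans hts) _

theorem lt_apply_pieceIndex_succ {a : ℕ → ℝ} {m : ℕ} {t : ℝ}
    (h : pieceIndex a m t + 1 < m) : t < a (pieceIndex a m t + 1) :=
  not_le.1 <| Nat.findGreatest_is_greatest (Nat.lt_succ_self _)
    (show pieceIndex a m t + 1 ≤ m - 1 by omega)

theorem pieceCoord_mem_Icc {a b : ℕ → ℝ} {k : ℕ} {t : ℝ} (hab : a k < b k)
    (ht : a k ≤ t) : pieceCoord a b k t ∈ Set.Icc 0 1 :=
  ⟨le_min zero_le_one (div_nonneg (sub_nonneg.2 ht) (sub_pos.2 hab).le), min_le_left _ _⟩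

theorem pieceCoord_mono {a b : ℕ → ℝ} {k : ℕ} (hab : a k < b k) :
    Monotone (pieceCoord a b k) := fun _ _ hts =>
  min_le_min_left 1 (div_le_div_of_nonneg_right (sub_le_sub_right hts _) (sub_pos.2 hab).le)

namespace IsCantorLadder

variable {m : ℕ} {a b ρ : ℕ → ℝ} {C : ℝ → ℝ}

theorem weight_lt_one (hC : IsCantorLadder m a b ρ C) {k : ℕ} (hk : k < m) : ρ k < 1 := by
  have hm := hC.two_le
  have hj : (if k = 0 then 1 else 0) < m := by split_ifs <;> omega
  rw [← hC.sum_weight]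
  exact single_lt_sum (by split_ifs <;> omega) (mem_range.2 hk) (mem_range.2 hj)
    (hC.weight_pos _ hj) fun i hi _ => (hC.weight_pos i (mem_range.1 hi)).le

theorem exists_weight_le (hC : IsCantorLadder m a b ρ C) :
    ∃ r ∈ Set.Ico (0:ℝ) 1, ∀ k < m, ρ k ≤ r := by
  have hm : 0 < m := by linarith [hC.two_le]
  have hne : (Finset.range m).Nonempty := nonempty_range_iff.2 hm.ne'
  have hle : ∀ k < m, ρ k ≤ (Finset.range m).sup' hne ρ := fun k hk =>
    le_sup' ρ (mem_range.2 hk)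
  exact ⟨_, ⟨(hC.weight_pos 0 hm).le.trans (hle 0 hm),
    (sup'_lt_iff hne).2 fun k hk => hC.weight_lt_one (mem_range.1 hk)⟩, hle⟩

theorem sum_range_mono (hC : IsCantorLadder m a b ρ C) {k l : ℕ} (hkl : k ≤ l) (hl : l ≤ m) :
    ∑ j ∈ Finset.range k, ρ j ≤ ∑ j ∈ Finset.range l, ρ j :=
  sum_le_sum_of_subset_of_nonneg (range_subset_range.2 hkl) fun j hj _ =>
    (hC.weight_pos j ((mem_range.1 hj).trans_le hl)).le

theorem sum_range_nonneg (hC : IsCantorLadder m a b ρ C) {k : ℕ} (hk : k ≤ m) :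
    0 ≤ ∑ j ∈ Finset.range k, ρ j := by
  simpa using hC.sum_range_mono (Nat.zero_le k) hk

theorem sum_range_le_one (hC : IsCantorLadder m a b ρ C) {k : ℕ} (hk : k ≤ m) :
    ∑ j ∈ Finset.range k, ρ j ≤ 1 :=
  hC.sum_weight ▸ hC.sum_range_mono hk le_rfl

theorem a_mono (hC : IsCantorLadder m a b ρ C) {k l : ℕ} (hkl : k ≤ l) (hl : l < m) :
    a k ≤ a l := by
  induction l, hkl using Nat.le_induction with
  | base => rfl
  | succ l _ ih =>
    exact (ih (by omega)).trans ((hC.a_lt_b l (by omega)).le.trans (hC.b_le_a_succ l hl))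

theorem step_subset_Icc (hC : IsCantorLadder m a b ρ C) {k : ℕ} (hk : k < m) :
    Set.Icc (a k) (b k) ⊆ Set.Icc 0 1 := by
  refine Icc_subset_Icc (hC.a_zero ▸ hC.a_mono (Nat.zero_le k) hk) ?_
  rcases lt_or_ge (k + 1) m with hk1 | hk1
  · calc b k ≤ a (k + 1) := hC.b_le_a_succ k hk1
      _ ≤ a (m - 1) := hC.a_mono (by omega) (by omega)
      _ ≤ 1 := hC.b_last ▸ (hC.a_lt_b (m - 1) (by omega)).le
  · exact (show k = m - 1 by omega) ▸ hC.b_last.le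

theorem map_zero (hC : IsCantorLadder m a b ρ C) : C 0 = 0 := by
  have hm : 0 < m := by linarith [hC.two_le]
  have h := hC.eq_on_step 0 hm 0 ⟨hC.a_zero.le, hC.a_zero ▸ (hC.a_lt_b 0 hm).le⟩
  simp only [hC.a_zero, sub_zero, zero_div, Finset.range_zero, sum_empty, zero_add] at h
  have : (1 - ρ 0) * C 0 = 0 := by linarith
  exact (mul_eq_zero.1 this).resolve_left (by linarith [hC.weight_lt_one hm])

theorem map_one (hC : IsCantorLadder m a b ρ C) : C 1 = 1 := by
  have hm : m - 1 < m := by have := hC.two_le; omega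
  have hlt := hC.a_lt_b (m - 1) hm
  have h := hC.eq_on_step (m - 1) hm 1 ⟨hC.b_last ▸ hlt.le, hC.b_last.ge⟩
  rw [hC.b_last, div_self (by linarith [hC.b_last])] at h
  have hsum : ∑ j ∈ Finset.range (m - 1), ρ j + ρ (m - 1) = 1 := by
    rw [← sum_range_succ, Nat.sub_add_cancel (by omega), hC.sum_weight]
  have : (1 - ρ (m - 1)) * (C 1 - 1) = 0 := by linarith
  linarith [(mul_eq_zero.1 this).resolve_left (by linarith [hC.weight_lt_one hm])]

theorem pieceIndex_lt (hC : IsCantorLadder m a b ρ C) (t : ℝ) : pieceIndex a m t < m :=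
  (Nat.findGreatest_le _).trans_lt (by have := hC.two_le; omega)

theorem apply_pieceIndex_le (hC : IsCantorLadder m a b ρ C) {t : ℝ} (ht : 0 ≤ t) :
    a (pieceIndex a m t) ≤ t :=
  Nat.findGreatest_spec (P := fun j => a j ≤ t) (Nat.zero_le _) (hC.a_zero ▸ ht)

theorem eq_on_piece (hC : IsCantorLadder m a b ρ C) {t : ℝ} (ht : t ∈ Set.Icc 0 1) :
    C t = ∑ j ∈ Finset.range (pieceIndex a m t), ρ j +
      ρ (pieceIndex a m t) * C (pieceCoord a b (pieceIndex a m t) t) := by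
  set k := pieceIndex a m t
  have hk := hC.pieceIndex_lt t
  have hak := hC.apply_pieceIndex_le ht.1
  have hd : 0 < b k - a k := sub_pos.2 (hC.a_lt_b k hk)
  rcases le_or_gt t (b k) with htb | hbt
  · rw [pieceCoord, min_eq_right ((div_le_one hd).2 (by linarith))]
    exact hC.eq_on_step k hk t ⟨hak, htb⟩
  · have hk1 : k + 1 < m := by
      by_contra h
      have hkm : k = m - 1 := by omega
      linarith [hkm ▸ hC.b_last, ht.2]
    rw [pieceCoord, min_eq_left ((one_le_div hd).2 (by linarith)), hC.map_one, mul_one,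
      ← sum_range_succ]
    exact hC.eq_on_gap k hk1 t ⟨hbt.le, (lt_apply_pieceIndex_succ hk1).le⟩

theorem mem_Icc (hC : IsCantorLadder m a b ρ C) {t : ℝ} (ht : t ∈ Set.Icc 0 1) :
    C t ∈ Set.Icc 0 1 := by
  obtain ⟨r, hr, hρr⟩ := hC.exists_weight_le
  obtain ⟨M, hM⟩ := hC.bddOn
  have key := nonpos_of_forall_exists_le_mul (X := Set.Icc (0:ℝ) 1)
    (f := fun x => max (-C x) (C x - 1)) hr.2 ⟨M, ?_⟩ ?_ ⟨t, ht⟩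
  · obtain ⟨h0, h1⟩ := max_le_iff.1 key
    exact ⟨neg_nonpos.1 h0, sub_nonpos.1 h1⟩
  · rintro _ ⟨⟨x, hx⟩, rfl⟩
    have := abs_le.1 (hM x hx)
    exact max_le (by linarith) (by linarith)
  · rintro ⟨x, hx⟩
    set k := pieceIndex a m x
    have hk := hC.pieceIndex_lt x
    have hρk := hC.weight_pos k hk
    refine ⟨⟨_, pieceCoord_mem_Icc (hC.a_lt_b k hk) (hC.apply_pieceIndex_le hx.1)⟩, ρ k,
      ⟨hρk.le, hρr k hk⟩, ?_⟩
    have h0 := hC.sum_range_nonneg hk.le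
    have h1 := hC.sum_range_le_one (Nat.succ_le_of_lt hk)
    rw [sum_range_succ] at h1
    simp only
    rw [hC.eq_on_piece hx, mul_max_of_nonneg _ _ hρk.le]
    exact max_le_max (by linarith) (by linarith)

theorem le_of_pieceIndex_lt (hC : IsCantorLadder m a b ρ C) {t s : ℝ} (ht : t ∈ Set.Icc 0 1)
    (hs : s ∈ Set.Icc 0 1) (hts : pieceIndex a m t < pieceIndex a m s) : C t ≤ C s := by
  have hk := hC.pieceIndex_lt t
  have hl := hC.pieceIndex_lt s
  have hCu := hC.mem_Icc (pieceCoord_mem_Icc (hC.a_lt_b _ hk) (hC.apply_pieceIndex_le ht.1))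
  have hCv := hC.mem_Icc (pieceCoord_mem_Icc (hC.a_lt_b _ hl) (hC.apply_pieceIndex_le hs.1))
  have hsum := hC.sum_range_mono hts hl.le
  rw [sum_range_succ] at hsum
  rw [hC.eq_on_piece ht, hC.eq_on_piece hs]
  linarith [mul_le_of_le_one_right (hC.weight_pos _ hk).le hCu.2,
    mul_nonneg (hC.weight_pos _ hl).le hCv.1]

theorem monotoneOn (hC : IsCantorLadder m a b ρ C) : MonotoneOn C (Set.Icc 0 1) := by
  obtain ⟨r, hr, hρr⟩ := hC.exists_weight_le
  intro t ht s hs hts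
  have key := nonpos_of_forall_exists_le_mul
    (X := {p : ℝ × ℝ // p.1 ∈ Set.Icc 0 1 ∧ p.2 ∈ Set.Icc 0 1 ∧ p.1 ≤ p.2})
    (f := fun p => C p.1.1 - C p.1.2) hr.2 ⟨1, ?_⟩ ?_ ⟨(t, s), ht, hs, hts⟩
  · simpa using key
  · rintro _ ⟨⟨⟨t, s⟩, ht, hs, -⟩, rfl⟩
    linarith [(hC.mem_Icc ht).2, (hC.mem_Icc hs).1]
  · rintro ⟨⟨t, s⟩, ht, hs, hts⟩
    dsimp only at ht hs hts ⊢
    rcases (pieceIndex_mono (a := a) (m := m) hts).lt_or_eq with hlt | heq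
    · refine ⟨⟨(t, s), ht, hs, hts⟩, 0, ⟨le_rfl, hr.1⟩, ?_⟩
      simpa using hC.le_of_pieceIndex_lt ht hs hlt
    · obtain ⟨k, hkt⟩ : ∃ k, pieceIndex a m t = k := ⟨_, rfl⟩
      have hk : k < m := hkt ▸ hC.pieceIndex_lt t
      have hak := hC.a_lt_b k hk
      refine ⟨⟨(pieceCoord a b k t, pieceCoord a b k s),
        pieceCoord_mem_Icc hak (hkt ▸ hC.apply_pieceIndex_le ht.1),
        pieceCoord_mem_Icc hak (hkt ▸ heq ▸ hC.apply_pieceIndex_le hs.1),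
        pieceCoord_mono hak hts⟩,
        ρ k, ⟨(hC.weight_pos k hk).le, hρr k hk⟩, le_of_eq ?_⟩
      dsimp only
      rw [hC.eq_on_piece ht, hC.eq_on_piece hs, ← heq, hkt]
      ring

theorem sum_add_mul_mem_image (hC : IsCantorLadder m a b ρ C) {k : ℕ} (hk : k < m) {y : ℝ}
    (hy : y ∈ C '' Set.Icc 0 1) :
    ∑ j ∈ Finset.range k, ρ j + ρ k * y ∈ C '' Set.Icc 0 1 := by
  obtain ⟨x, hx, rfl⟩ := hy
  have hd : 0 < b k - a k := sub_pos.2 (hC.a_lt_b k hk)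
  have hmem : a k + x * (b k - a k) ∈ Set.Icc (a k) (b k) :=
    ⟨by nlinarith [hx.1], by nlinarith [hx.2]⟩
  refine ⟨_, hC.step_subset_Icc hk hmem, ?_⟩
  rw [hC.eq_on_step k hk _ hmem, add_sub_cancel_left, mul_div_cancel_right₀ _ hd.ne']

theorem infDist_sum_add_mul_le (hC : IsCantorLadder m a b ρ C) {k : ℕ} (hk : k < m) (y : ℝ) :
    Metric.infDist (∑ j ∈ Finset.range k, ρ j + ρ k * y) (C '' Set.Icc 0 1) ≤
      ρ k * Metric.infDist y (C '' Set.Icc 0 1) := by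
  have hρk := hC.weight_pos k hk
  rw [← div_le_iff₀' hρk, Metric.le_infDist ((Set.nonempty_Icc.2 zero_le_one).image C)]
  intro z hz
  rw [div_le_iff₀' hρk]
  calc Metric.infDist (∑ j ∈ Finset.range k, ρ j + ρ k * y) (C '' Set.Icc 0 1)
      _ ≤ dist (∑ j ∈ Finset.range k, ρ j + ρ k * y)
            (∑ j ∈ Finset.range k, ρ j + ρ k * z) :=
        Metric.infDist_le_dist_of_mem (hC.sum_add_mul_mem_image hk hz)
      _ = ρ k * dist y z := by
        rw [dist_add_left, Real.dist_eq, Real.dist_eq, ← mul_sub, abs_mul, abs_of_pos hρk]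

theorem Icc_subset_closure_image (hC : IsCantorLadder m a b ρ C) :
    Set.Icc 0 1 ⊆ closure (C '' Set.Icc 0 1) := by
  obtain ⟨r, hr, hρr⟩ := hC.exists_weight_le
  have h0S : C 0 ∈ C '' Set.Icc 0 1 := ⟨0, ⟨le_rfl, zero_le_one⟩, rfl⟩
  intro y hy
  rw [Metric.mem_closure_iff_infDist_zero ⟨_, h0S⟩]
  refine le_antisymm ?_ Metric.infDist_nonneg
  refine nonpos_of_forall_exists_le_mul (X := Set.Icc (0:ℝ) 1)
    (f := fun y => Metric.infDist y.1 (C '' Set.Icc 0 1)) hr.2 ⟨1, ?_⟩ ?_ ⟨y, hy⟩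
  · rintro _ ⟨⟨y, hy⟩, rfl⟩
    calc Metric.infDist y (C '' Set.Icc 0 1) ≤ dist y (C 0) := Metric.infDist_le_dist_of_mem h0S
      _ ≤ 1 := by rw [hC.map_zero, Real.dist_0_eq_abs, abs_of_nonneg hy.1]; exact hy.2
  · rintro ⟨y, hy⟩
    obtain ⟨k, hk, hky⟩ := exists_apply_le_and_le_apply_succ
      (u := fun k => ∑ j ∈ Finset.range k, ρ j) (by linarith [hC.two_le]) (by simpa using hy.1)
      (hC.sum_weight ▸ hy.2)
    have hρk := hC.weight_pos k hk
    simp only [sum_range_succ] at hky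
    obtain ⟨y', hy', rfl⟩ :
        ∃ y' ∈ Set.Icc (0:ℝ) 1, y = ∑ j ∈ Finset.range k, ρ j + ρ k * y' :=
      ⟨(y - ∑ j ∈ Finset.range k, ρ j) / ρ k,
        ⟨div_nonneg (by linarith) hρk.le, (div_le_one hρk).2 (by linarith)⟩,
        by rw [mul_div_cancel₀ _ hρk.ne']; ring⟩
    exact ⟨⟨y', hy'⟩, ρ k, ⟨hρk.le, hρr k hk⟩, hC.infDist_sum_add_mul_le hk y'⟩

theorem continuousOn (hC : IsCantorLadder m a b ρ C) : ContinuousOn C (Set.Icc 0 1) :=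
  hC.monotoneOn.continuousOn_Icc_of_Icc_subset_closure_image zero_le_one <| by
    rw [hC.map_zero, hC.map_one]
    exact hC.Icc_subset_closure_image

end IsCantorLadder

/-- The generalized Cantor ladder `C` (the unique bounded solution of the
self-similarity relations) is continuous, nondecreasing on `[0,1]`, and
satisfies `C 0 = 0`, `C 1 = 1`. Steps are indexed by `k = 0, …, m-1`. -/
theorem cantorLadder_continuous_monotone
    (m : ℕ) (a b ρ : ℕ → ℝ) (C : ℝ → ℝ)
    (hm : 2 ≤ m)
    (ha0 : a 0 = 0) (hbm : b (m - 1) = 1)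
    (hab : ∀ k < m, a k < b k)
    (horder : ∀ k, k + 1 < m → b k ≤ a (k + 1))
    (hρpos : ∀ k < m, 0 < ρ k)
    (hρsum : ∑ k ∈ Finset.range m, ρ k = 1)
    -- `C` is bounded on `[0,1]`
    (hbd : ∃ M : ℝ, ∀ t ∈ Set.Icc (0:ℝ) 1, |C t| ≤ M)
    -- self-similarity on the steps: `C t = h_{k-1} + ρ_k C((t-a_k)/(b_k-a_k))`
    (hstep : ∀ k < m, ∀ t ∈ Set.Icc (a k) (b k),
      C t = (∑ j ∈ Finset.range k, ρ j) + ρ k * C ((t - a k) / (b k - a k)))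
    -- `C` is constant `h_k` on the gaps
    (hgap : ∀ k, k + 1 < m → ∀ t ∈ Set.Icc (b k) (a (k + 1)),
      C t = ∑ j ∈ Finset.range (k + 1), ρ j) :
    ContinuousOn C (Set.Icc 0 1) ∧ MonotoneOn C (Set.Icc 0 1) ∧ C 0 = 0 ∧ C 1 = 1 := by
  have hC : IsCantorLadder m a b ρ C :=
    ⟨hm, ha0, hbm, hab, horder, hρpos, hρsum, hbd, hstep, hgap⟩
  exact ⟨hC.continuousOn, hC.monotoneOn, hC.map_zero, hC.map_one⟩
end

section
/- The function E(λ) = ∫_0^1 e^{λC(t)} dt satisfies the recurrence E(λ) = Σ_{k=1}^m Δ_{2k−1} e^{h_{k−1}λ} E(ρ_k λ) + Σ_{k=1}^{m−1} Δ_{2k} e^{h_k λ}, where Δ_{2k−1} = b_k − a_k, Δ_{2k} = a_{k+1} − b_k, and h_k = ρ_1 + … + ρ_k. -/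
/-! The graph of `C` over `[0, 1]` splits into the `m` steps `[a k, b k]`, on each of which `C` is
an affinely rescaled copy of itself, and the `m - 1` gaps `[b k, a (k + 1)]`, on which it is
constant. Splitting `∫₀¹ e^{λ C}` along this partition, a step contributes
`(b k - a k) e^{h_{k-1} λ} E(ρ_k λ)` after the substitution `s = (t - a k) / (b k - a k)`, and a
gap contributes its length times `e^{h_k λ}`. -/

open Set Finset MeasureTheory intervalIntegral

section Partition

variable {E : Type*} [NormedAddCommGroup E] {f : ℝ → E} {μ : Measure ℝ}
  (a b : ℕ → ℝ) {n : ℕ}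

theorem intervalIntegrable_of_steps_of_gaps
    (hstep : ∀ k ≤ n, IntervalIntegrable f μ (a k) (b k))
    (hgap : ∀ k < n, IntervalIntegrable f μ (b k) (a (k + 1))) :
    IntervalIntegrable f μ (a 0) (b n) := by
  induction n with
  | zero => exact hstep 0 le_rfl
  | succ n ih =>
    exact ((ih (fun k hk => hstep k (by omega)) (fun k hk => hgap k (by omega))).trans
      (hgap n n.lt_succ_self)).trans (hstep (n + 1) le_rfl)

theorem integral_eq_sum_steps_add_sum_gaps [NormedSpace ℝ E]
    (hstep : ∀ k ≤ n, IntervalIntegrable f μ (a k) (b k))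
    (hgap : ∀ k < n, IntervalIntegrable f μ (b k) (a (k + 1))) :
    ∫ x in a 0..b n, f x ∂μ =
      ∑ k ∈ range (n + 1), ∫ x in a k..b k, f x ∂μ +
        ∑ k ∈ range n, ∫ x in b k..a (k + 1), f x ∂μ := by
  induction n with
  | zero => simp
  | succ n ih =>
    have hstep' : ∀ k ≤ n, IntervalIntegrable f μ (a k) (b k) := fun k hk => hstep k (by omega)
    have hgap' : ∀ k < n, IntervalIntegrable f μ (b k) (a (k + 1)) := fun k hk => hgap k (by omega)
    have hgap_n := hgap n n.lt_succ_self
    rw [← integral_add_adjacent_intervals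
        ((intervalIntegrable_of_steps_of_gaps a b hstep' hgap').trans hgap_n)
        (hstep (n + 1) le_rfl),
      ← integral_add_adjacent_intervals (intervalIntegrable_of_steps_of_gaps a b hstep' hgap')
        hgap_n,
      ih hstep' hgap', sum_range_succ (fun k => ∫ x in a k..b k, f x ∂μ) (n + 1),
      sum_range_succ (fun k => ∫ x in b k..a (k + 1), f x ∂μ) n]
    abel

end Partition

theorem intervalIntegral.integral_comp_sub_div_sub {E : Type*} [NormedAddCommGroup E]
    [NormedSpace ℝ E] (g : ℝ → E) {a b : ℝ} (hab : a ≠ b) :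
    ∫ t in a..b, g ((t - a) / (b - a)) = (b - a) • ∫ t in (0 : ℝ)..1, g t := by
  have hba : b - a ≠ 0 := sub_ne_zero.mpr hab.symm
  simp only [sub_div]
  rw [integral_comp_div_sub g hba, sub_self, div_sub_div_same, div_self hba]

section SelfSimilar

variable {C : ℝ → ℝ} {a b h r : ℝ}

theorem ContinuousOn.of_eq_rescale (hC : ContinuousOn C (Icc 0 1)) (hab : a < b)
    (hself : ∀ t ∈ Icc a b, C t = h + r * C ((t - a) / (b - a))) :
    ContinuousOn C (Icc a b) := by
  have hmaps : MapsTo (fun t => (t - a) / (b - a)) (Icc a b) (Icc 0 1) := fun t ht =>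
    ⟨div_nonneg (by linarith [ht.1]) (by linarith),
      (div_le_one (by linarith)).mpr (by linarith [ht.2])⟩
  have hrescale : ContinuousOn (fun t => (t - a) / (b - a)) (Icc a b) := by fun_prop
  exact (continuousOn_const.add (continuousOn_const.mul (hC.comp hrescale hmaps))).congr hself

theorem integral_exp_mul_of_eq_rescale (lam : ℝ) (hab : a < b)
    (hself : ∀ t ∈ Icc a b, C t = h + r * C ((t - a) / (b - a))) :
    ∫ t in a..b, Real.exp (lam * C t) =
      (b - a) * Real.exp (h * lam) * ∫ t in (0 : ℝ)..1, Real.exp (r * lam * C t) := by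
  have hexp : EqOn (fun t => Real.exp (lam * C t))
      (fun t => Real.exp (h * lam) * Real.exp (r * lam * C ((t - a) / (b - a)))) (uIcc a b) := by
    intro t ht
    rw [uIcc_of_le hab.le] at ht
    simp only [hself t ht, ← Real.exp_add]
    ring_nf
  rw [integral_congr hexp, intervalIntegral.integral_const_mul,
    integral_comp_sub_div_sub (fun s => Real.exp (r * lam * C s)) hab.ne, smul_eq_mul]
  ring

theorem integral_exp_mul_of_eqOn_const (lam : ℝ) (hab : a ≤ b) (hconst : ∀ t ∈ Icc a b, C t = h) :
    ∫ t in a..b, Real.exp (lam * C t) = (b - a) * Real.exp (h * lam) := by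
  have hexp : EqOn (fun t => Real.exp (lam * C t)) (fun _ => Real.exp (h * lam)) (uIcc a b) :=
    fun t ht => by
      rw [uIcc_of_le hab] at ht
      simp only [hconst t ht, mul_comm]
  rw [integral_congr hexp, intervalIntegral.integral_const, smul_eq_mul]

end SelfSimilar

/-- Steps are indexed by `k = 0, …, m-1`, so `Δ_{2k-1} = b k - a k`,
`Δ_{2k} = a (k+1) - b k`, `h_{k-1} = ∑_{j<k} ρ j`. -/
theorem cantorLadder_E_recurrence_general
    (m : ℕ) (a b ρ : ℕ → ℝ) (C : ℝ → ℝ)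
    (hm : 1 ≤ m)
    (ha0 : a 0 = 0) (hbm : b (m - 1) = 1)
    (hab : ∀ k < m, a k < b k)
    (horder : ∀ k, k + 1 < m → b k ≤ a (k + 1))
    (hcont : ContinuousOn C (Set.Icc 0 1))
    (hstep : ∀ k < m, ∀ t ∈ Set.Icc (a k) (b k),
      C t = (∑ j ∈ Finset.range k, ρ j) + ρ k * C ((t - a k) / (b k - a k)))
    (hgap : ∀ k, k + 1 < m → ∀ t ∈ Set.Icc (b k) (a (k + 1)),
      C t = ∑ j ∈ Finset.range (k + 1), ρ j)
    (lam : ℝ) :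
    (∫ t in (0:ℝ)..1, Real.exp (lam * C t)) =
      (∑ k ∈ Finset.range m, (b k - a k) *
          Real.exp ((∑ j ∈ Finset.range k, ρ j) * lam) *
          ∫ t in (0:ℝ)..1, Real.exp (ρ k * lam * C t))
      + ∑ k ∈ Finset.range (m - 1), (a (k + 1) - b k) *
          Real.exp ((∑ j ∈ Finset.range (k + 1), ρ j) * lam) := by
  obtain ⟨n, rfl⟩ : ∃ n, m = n + 1 := ⟨m - 1, by omega⟩
  rw [add_tsub_cancel_right] at hbm ⊢
  have hint : ∀ {u v}, u ≤ v → ContinuousOn C (Icc u v) →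
      IntervalIntegrable (fun t => Real.exp (lam * C t)) volume u v := fun huv hC =>
    (continuousOn_const.mul hC).rexp.intervalIntegrable_of_Icc huv
  have hsplit := integral_eq_sum_steps_add_sum_gaps a b (n := n)
    (fun k hk => hint (hab k (by omega)).le
      (hcont.of_eq_rescale (hab k (by omega)) (hstep k (by omega))))
    (fun k hk => hint (horder k (by omega)) (continuousOn_const.congr (hgap k (by omega))))
  rw [ha0, hbm] at hsplit
  rw [hsplit]
  congr 1
  · refine sum_congr rfl fun k hk => ?_
    have hk : k < n + 1 := mem_range.mp hk
    exact integral_exp_mul_of_eq_rescale lam (hab k hk) (hstep k hk)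
  · refine sum_congr rfl fun k hk => ?_
    have hk : k + 1 < n + 1 := by simpa using hk
    exact integral_exp_mul_of_eqOn_const lam (horder k hk) (hgap k hk)

/-- The recurrence relation for `E(λ) = ∫_0^1 e^{λ C(t)} dt`:
`E(λ) = ∑_{k=1}^m Δ_{2k-1} e^{h_{k-1} λ} E(ρ_k λ) + ∑_{k=1}^{m-1} Δ_{2k} e^{h_k λ}`.
Steps are indexed by `k = 0, …, m-1`, so `Δ_{2k-1} = b k - a k`,
`Δ_{2k} = a (k+1) - b k`, `h_{k-1} = ∑_{j<k} ρ j`. -/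
theorem cantorLadder_E_recurrence
    (m : ℕ) (a b ρ : ℕ → ℝ) (C : ℝ → ℝ)
    (hm : 1 ≤ m)
    (ha0 : a 0 = 0) (hbm : b (m - 1) = 1)
    (hab : ∀ k < m, a k < b k)
    (horder : ∀ k, k + 1 < m → b k ≤ a (k + 1))
    (hρpos : ∀ k < m, 0 < ρ k)
    (hρsum : ∑ j ∈ Finset.range m, ρ j = 1)
    (hcont : ContinuousOn C (Set.Icc 0 1))
    (hstep : ∀ k < m, ∀ t ∈ Set.Icc (a k) (b k),
      C t = (∑ j ∈ Finset.range k, ρ j) + ρ k * C ((t - a k) / (b k - a k)))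
    (hgap : ∀ k, k + 1 < m → ∀ t ∈ Set.Icc (b k) (a (k + 1)),
      C t = ∑ j ∈ Finset.range (k + 1), ρ j)
    (lam : ℝ) :
    (∫ t in (0:ℝ)..1, Real.exp (lam * C t)) =
      (∑ k ∈ Finset.range m, (b k - a k) *
          Real.exp ((∑ j ∈ Finset.range k, ρ j) * lam) *
          ∫ t in (0:ℝ)..1, Real.exp (ρ k * lam * C t))
      + ∑ k ∈ Finset.range (m - 1), (a (k + 1) - b k) *
          Real.exp ((∑ j ∈ Finset.range (k + 1), ρ j) * lam) :=
  cantorLadder_E_recurrence_general m a b ρ C hm ha0 hbm hab horder hcont hstep hgap lam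
end

section
/- (Main Lemma) Suppose F : [0,∞) → ℝ satisfies: (1) 1 ≤ F(λ) ≤ e^λ for all λ ≥ 0; (2) F(ηλ) = d·e^{(η−1)λ}·F(λ) + f(λ) for all λ ≥ 0, where 0 < d < 1 and η > 1; (3) f(λ) = O(e^{(η−ε)λ}) as λ → ∞ for some ε > 0. Then there exists a 1-periodic function Φ such that F(λ) = Φ(log_η λ)·λ^α·e^λ + O(e^{(1−ε)λ}) as λ → ∞, where α = log_η d < 0. -/
open Real Filter Asymptotics

/-!
With `G λ = F λ e^{-λ}` and `g λ = f λ e^{-ηλ}` the recursion reads `G (ηλ) = d G λ + g λ`,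
with `g λ = O(e^{-ελ})`. Since `ηᵏ ≥ 1 + k(η - 1)`, the terms of `S λ = ∑ₖ g (ηᵏλ) / dᵏ⁺¹` decay
geometrically for large `λ`, so `S λ = O(e^{-ελ})`, and `Ψ = G + S` scales exactly:
`Ψ (ηλ) = d Ψ λ`. Hence `x ↦ Ψ (ηˣ) / dˣ` is eventually `1`-periodic, so it agrees for large `x`
with a `1`-periodic `Φ`, and `Ψ λ = Φ (log_η λ) λ^α`.
-/

theorem exists_periodic_eventuallyEq_of_eventually_add_one_eq {h : ℝ → ℝ}
    (hh : ∀ᶠ x in atTop, h (x + 1) = h x) :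
    ∃ Φ : ℝ → ℝ, Function.Periodic Φ 1 ∧ h =ᶠ[atTop] Φ := by
  obtain ⟨x₀, hx₀⟩ := eventually_atTop.mp hh
  refine ⟨fun x => h (Int.fract x + ⌈x₀⌉), fun x => by simp only [Int.fract_add_one], ?_⟩
  filter_upwards [eventually_ge_atTop (⌈x₀⌉ : ℝ)] with x hx
  have hshift : ∀ n : ℤ, ⌈x₀⌉ ≤ n → h (Int.fract x + n) = h (Int.fract x + ⌈x₀⌉) := by
    intro n hn
    induction n, hn using Int.leInduction with
    | base => rfl
    | succ n hn ih =>
      have hx₀n : x₀ ≤ Int.fract x + n :=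
        (Int.le_ceil x₀).trans
          ((Int.cast_le.mpr hn).trans (le_add_of_nonneg_left (Int.fract_nonneg x)))
      rw [← ih, ← hx₀ _ hx₀n]
      push_cast
      ring_nf
  calc h x = h (Int.fract x + ⌊x⌋) := by rw [Int.fract_add_floor]
    _ = h (Int.fract x + ⌈x₀⌉) := hshift _ (Int.le_floor.mpr hx)

theorem exists_periodic_of_eventually_mul_eq {Ψ : ℝ → ℝ} {d η : ℝ} (hd : 0 < d) (hη : 1 < η)
    (hΨ : ∀ᶠ lam in atTop, Ψ (η * lam) = d * Ψ lam) :
    ∃ Φ : ℝ → ℝ, Function.Periodic Φ 1 ∧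
      ∀ᶠ lam in atTop, Ψ lam = Φ (log lam / log η) * lam ^ (log d / log η) := by
  have hlogη : 0 < log η := log_pos hη
  obtain ⟨Φ, hΦ, hhΦ⟩ := exists_periodic_eventuallyEq_of_eventually_add_one_eq
    (h := fun x => Ψ (η ^ x) / d ^ x) <| by
      filter_upwards [(tendsto_rpow_atTop_of_base_gt_one η hη).eventually hΨ] with x hx
      rw [rpow_add_one (by positivity), rpow_add_one hd.ne', mul_comm _ η, hx, mul_comm (d ^ x) d,
        mul_div_mul_left _ _ hd.ne']
  refine ⟨Φ, hΦ, ?_⟩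
  have hlog : Tendsto (fun lam => log lam / log η) atTop atTop :=
    tendsto_log_atTop.atTop_div_const hlogη
  filter_upwards [hlog.eventually hhΦ, eventually_gt_atTop 0] with lam hlam hpos
  rw [← hlam]
  have hpow : η ^ (log lam / log η) = lam := by
    rw [rpow_def_of_pos (by linarith), mul_div_cancel₀ _ hlogη.ne', exp_log hpos]
  have hdpow : d ^ (log lam / log η) = lam ^ (log d / log η) := by
    rw [rpow_def_of_pos hd, rpow_def_of_pos hpos]
    ring_nf
  rw [hpow, hdpow, div_mul_cancel₀ _ (by positivity)]

theorem exp_neg_mul_pow_mul_le {ε η lam : ℝ} (hε : 0 ≤ ε) (hη : 1 ≤ η) (hlam : 0 ≤ lam) (k : ℕ) :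
    exp (-(ε * (η ^ k * lam))) ≤ exp (-(ε * lam)) * exp (-(ε * (η - 1) * lam)) ^ k := by
  rw [← exp_nat_mul, ← exp_add, exp_le_exp]
  have hbernoulli : (1 + k * (η - 1)) * lam ≤ η ^ k * lam :=
    mul_le_mul_of_nonneg_right (one_add_mul_sub_le_pow (by linarith) k) hlam
  nlinarith

/-- The solution of `S (η * lam) = d * S lam - g lam` that is small when `g` is. -/
noncomputable def correction (g : ℝ → ℝ) (d η lam : ℝ) : ℝ :=
  ∑' k : ℕ, g (η ^ k * lam) / d ^ (k + 1)

theorem correction_mul_eq {g : ℝ → ℝ} {d η lam : ℝ} (hd : d ≠ 0)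
    (hs : Summable fun k : ℕ => g (η ^ k * lam) / d ^ (k + 1)) :
    correction g d η (η * lam) = d * correction g d η lam - g lam := by
  have hshift : ∀ k : ℕ, g (η ^ k * (η * lam)) / d ^ (k + 1) =
      d * (g (η ^ (k + 1) * lam) / d ^ (k + 1 + 1)) := by
    intro k
    rw [pow_succ η, pow_succ d (k + 1)]
    field_simp
  rw [correction, correction, tsum_congr hshift, tsum_mul_left, hs.tsum_eq_zero_add]
  simp only [pow_zero, one_mul, zero_add, pow_one]
  rw [mul_add, mul_div_cancel₀ _ hd]
  ring

theorem abs_correction_term_le {g : ℝ → ℝ} {d η ε C R lam : ℝ} (hd : 0 < d) (hη : 1 ≤ η)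
    (hε : 0 ≤ ε) (hC : 0 ≤ C) (hg : ∀ x, R ≤ x → |g x| ≤ C * exp (-(ε * x)))
    (hR : R ≤ lam) (hlam : 0 ≤ lam) (hsmall : exp (-(ε * (η - 1) * lam)) ≤ d / 2) (k : ℕ) :
    |g (η ^ k * lam) / d ^ (k + 1)| ≤ C / d * exp (-(ε * lam)) * (1 / 2) ^ k := by
  have hηk : lam ≤ η ^ k * lam := le_mul_of_one_le_left hlam (one_le_pow₀ hη)
  calc |g (η ^ k * lam) / d ^ (k + 1)|
      ≤ C * exp (-(ε * (η ^ k * lam))) / d ^ (k + 1) := by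
        rw [abs_div, abs_of_pos (by positivity : 0 < d ^ (k + 1))]
        exact div_le_div_of_nonneg_right (hg _ (hR.trans hηk)) (by positivity)
    _ ≤ C * (exp (-(ε * lam)) * (d / 2) ^ k) / d ^ (k + 1) := by
        gcongr
        exact (exp_neg_mul_pow_mul_le hε hη hlam k).trans
          (mul_le_mul_of_nonneg_left (pow_le_pow_left₀ (exp_pos _).le hsmall k) (exp_pos _).le)
    _ = C / d * exp (-(ε * lam)) * (1 / 2) ^ k := by
        rw [div_pow, pow_succ]
        field_simp
        rw [mul_assoc, ← mul_pow]
        norm_num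

theorem eventually_summable_and_abs_correction_le {g : ℝ → ℝ} {d η ε : ℝ} (hd : 0 < d)
    (hη : 1 < η) (hε : 0 < ε) (hg : g =O[atTop] fun x => exp (-(ε * x))) :
    ∃ C, ∀ᶠ lam in atTop, Summable (fun k : ℕ => g (η ^ k * lam) / d ^ (k + 1)) ∧
      |correction g d η lam| ≤ C * exp (-(ε * lam)) := by
  obtain ⟨C, hC, hgC⟩ := hg.exists_pos
  obtain ⟨R, hR⟩ := eventually_atTop.mp hgC.bound
  have hsmall : ∀ᶠ lam in atTop, exp (-(ε * (η - 1) * lam)) ≤ d / 2 :=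
    (tendsto_exp_neg_atTop_nhds_zero.comp
      (tendsto_id.const_mul_atTop (mul_pos hε (by linarith)))).eventually
      (ge_mem_nhds (half_pos hd))
  have hgR : ∀ x, R ≤ x → |g x| ≤ C * exp (-(ε * x)) := fun x hx => by
    simpa only [norm_eq_abs, abs_exp] using hR x hx
  refine ⟨2 * (C / d), ?_⟩
  filter_upwards [hsmall, eventually_ge_atTop R, eventually_ge_atTop 0] with lam hlam hRlam hlam0
  have hterm : ∀ k : ℕ, |g (η ^ k * lam) / d ^ (k + 1)| ≤ C / d * exp (-(ε * lam)) * (1 / 2) ^ k :=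
    abs_correction_term_le hd hη.le hε.le hC.le hgR hRlam hlam0 hlam
  have hgeom : Summable fun k : ℕ => C / d * exp (-(ε * lam)) * (1 / 2 : ℝ) ^ k :=
    (summable_geometric_of_lt_one (by norm_num) (by norm_num)).mul_left _
  have hs : Summable fun k : ℕ => g (η ^ k * lam) / d ^ (k + 1) :=
    hgeom.of_norm_bounded hterm
  refine ⟨hs, ?_⟩
  calc |correction g d η lam|
      ≤ ∑' k : ℕ, C / d * exp (-(ε * lam)) * (1 / 2) ^ k :=
        (norm_tsum_le_tsum_norm hs.norm).trans (hs.norm.tsum_le_tsum hterm hgeom)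
    _ = 2 * (C / d) * exp (-(ε * lam)) := by
        rw [tsum_mul_left, tsum_geometric_two]
        ring

theorem exists_eventually_mul_eq_of_isBigO {G g : ℝ → ℝ} {d η ε : ℝ} (hd : 0 < d) (hη : 1 < η)
    (hε : 0 < ε) (hG : ∀ᶠ lam in atTop, G (η * lam) = d * G lam + g lam)
    (hg : g =O[atTop] fun x => exp (-(ε * x))) :
    ∃ Ψ : ℝ → ℝ, (∀ᶠ lam in atTop, Ψ (η * lam) = d * Ψ lam) ∧
      (G - Ψ) =O[atTop] fun x => exp (-(ε * x)) := by
  obtain ⟨C, hC⟩ := eventually_summable_and_abs_correction_le (η := η) hd hη hε hg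
  refine ⟨G + correction g d η, ?_, ?_⟩
  · filter_upwards [hG, hC] with lam hGlam hClam
    simp only [Pi.add_apply, hGlam, correction_mul_eq hd.ne' hClam.1]
    ring
  · refine IsBigO.of_bound C ?_
    filter_upwards [hC] with lam hlam
    simpa [norm_eq_abs, abs_exp] using hlam.2

theorem main_lemma_general (F f : ℝ → ℝ) (d η ε : ℝ)
    (hd0 : 0 < d) (hd1 : d < 1) (hη : 1 < η) (hε : 0 < ε)
    (h2 : ∀ lam : ℝ, 0 ≤ lam → F (η * lam) = d * Real.exp ((η - 1) * lam) * F lam + f lam)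
    (h3 : f =O[atTop] fun lam => Real.exp ((η - ε) * lam)) :
    Real.log d / Real.log η < 0 ∧
    ∃ Φ : ℝ → ℝ, (∀ x, Φ (x + 1) = Φ x) ∧
      (fun lam => F lam -
          Φ (Real.log lam / Real.log η) * lam ^ (Real.log d / Real.log η) * Real.exp lam)
        =O[atTop] fun lam => Real.exp ((1 - ε) * lam) := by
  refine ⟨div_neg_of_neg_of_pos (log_neg hd0 hd1) (log_pos hη), ?_⟩
  have hG : ∀ᶠ lam in atTop, F (η * lam) * exp (-(η * lam)) =
      d * (F lam * exp (-lam)) + f lam * exp (-(η * lam)) := by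
    filter_upwards [eventually_ge_atTop 0] with lam hlam
    have hexp : exp ((η - 1) * lam) * exp (-(η * lam)) = exp (-lam) := by
      rw [← exp_add]; ring_nf
    rw [h2 lam hlam]
    linear_combination d * F lam * hexp
  have hg : (fun lam => f lam * exp (-(η * lam))) =O[atTop] fun x => exp (-(ε * x)) :=
    (h3.mul (isBigO_refl (fun lam => exp (-(η * lam))) atTop)).congr_right
      fun lam => by rw [← exp_add]; ring_nf
  obtain ⟨Ψ, hΨ, hGΨ⟩ := exists_eventually_mul_eq_of_isBigO
    (G := fun lam => F lam * exp (-lam)) hd0 hη hε hG hg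
  obtain ⟨Φ, hΦ, hΨΦ⟩ := exists_periodic_of_eventually_mul_eq hd0 hη hΨ
  refine ⟨Φ, hΦ, (hGΨ.mul (isBigO_refl exp atTop)).congr' ?_ ?_⟩
  · filter_upwards [hΨΦ] with lam hlam
    simp only [Pi.sub_apply, ← hlam, sub_mul, mul_assoc, ← exp_add, neg_add_cancel, exp_zero,
      mul_one]
  · exact Eventually.of_forall fun lam => by simp only [← exp_add]; ring_nf

/-- The Main Lemma: if `1 ≤ F(λ) ≤ e^λ`, `F(ηλ) = d e^{(η-1)λ} F(λ) + f(λ)`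
with `0 < d < 1`, `η > 1`, and `f(λ) = O(e^{(η-ε)λ})` for some `ε > 0`, then
`F(λ) = Φ(log_η λ) λ^α e^λ + O(e^{(1-ε)λ})` as `λ → ∞`, where
`α = log_η d < 0` and `Φ` is `1`-periodic. -/
theorem main_lemma (F f : ℝ → ℝ) (d η ε : ℝ)
    (hd0 : 0 < d) (hd1 : d < 1) (hη : 1 < η) (hε : 0 < ε)
    (h1 : ∀ lam : ℝ, 0 ≤ lam → 1 ≤ F lam ∧ F lam ≤ Real.exp lam)
    (h2 : ∀ lam : ℝ, 0 ≤ lam → F (η * lam) = d * Real.exp ((η - 1) * lam) * F lam + f lam)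
    (h3 : f =O[atTop] fun lam => Real.exp ((η - ε) * lam)) :
    Real.log d / Real.log η < 0 ∧
    ∃ Φ : ℝ → ℝ, (∀ x, Φ (x + 1) = Φ x) ∧
      (fun lam => F lam -
          Φ (Real.log lam / Real.log η) * lam ^ (Real.log d / Real.log η) * Real.exp lam)
        =O[atTop] fun lam => Real.exp ((1 - ε) * lam) :=
  main_lemma_general F f d η ε hd0 hd1 hη hε h2 h3
end

section
/- Under the hypotheses of the Main Lemma, setting F_1(λ) = F(λ)/(λ^α e^λ) and f_1(λ) = f(λ)/(d λ^α e^{ηλ}), one has F_1(ηλ) = F_1(λ) + f_1(λ), and consequently F_1(λ) = Σ_{k=1}^∞ f_1(λ/η^k), the series converging absolutely for λ > 0. -/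
open Real Filter Asymptotics

/-- Under the hypotheses of the Main Lemma, with `F₁(λ) = F(λ)/(λ^α e^λ)` and
`f₁(λ) = f(λ)/(d λ^α e^{ηλ})` (where `α = log_η d`), one has
`F₁(ηλ) = F₁(λ) + f₁(λ)`, and `F₁(λ) = ∑_{k=1}^∞ f₁(λ/η^k)`, the series
converging absolutely for every `λ > 0`. -/
theorem main_lemma_series_representation (F f : ℝ → ℝ) (d η ε : ℝ)
    (hd0 : 0 < d) (hd1 : d < 1) (hη : 1 < η) (hε : 0 < ε)
    (h1 : ∀ lam : ℝ, 0 ≤ lam → 1 ≤ F lam ∧ F lam ≤ Real.exp lam)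
    (h2 : ∀ lam : ℝ, 0 ≤ lam → F (η * lam) = d * Real.exp ((η - 1) * lam) * F lam + f lam)
    (h3 : f =O[atTop] fun lam => Real.exp ((η - ε) * lam))
    (F₁ f₁ : ℝ → ℝ)
    (hF₁ : ∀ lam, F₁ lam = F lam / (lam ^ (Real.log d / Real.log η) * Real.exp lam))
    (hf₁ : ∀ lam, f₁ lam = f lam /
      (d * lam ^ (Real.log d / Real.log η) * Real.exp (η * lam))) :
    (∀ lam : ℝ, 0 < lam → F₁ (η * lam) = F₁ lam + f₁ lam) ∧
    (∀ lam : ℝ, 0 < lam →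
      Summable (fun k : ℕ => |f₁ (lam / η ^ (k + 1))|) ∧
      F₁ lam = ∑' k : ℕ, f₁ (lam / η ^ (k + 1))) := by
  set α : ℝ := Real.log d / Real.log η with hαdef
  have hη0 : (0:ℝ) < η := lt_trans one_pos hη
  have hlogη : Real.log η ≠ 0 := ne_of_gt (Real.log_pos hη)
  have hηα : η ^ α = d := by
    rw [hαdef, Real.rpow_def_of_pos hη0, mul_comm, div_mul_cancel₀ _ hlogη,
      Real.exp_log hd0]
  -- functional equation
  have key : ∀ lam : ℝ, 0 < lam → F₁ (η * lam) = F₁ lam + f₁ lam := by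
    intro lam hlam
    have hlam0 : (0:ℝ) ≤ lam := hlam.le
    have hrpow : (η * lam) ^ α = d * lam ^ α := by
      rw [Real.mul_rpow hη0.le hlam0, hηα]
    have hexp : Real.exp (η * lam) = Real.exp ((η - 1) * lam) * Real.exp lam := by
      rw [← Real.exp_add]; ring_nf
    have hpow : (0:ℝ) < lam ^ α := Real.rpow_pos_of_pos hlam α
    rw [hF₁, hF₁, hf₁, h2 lam hlam0, hrpow, hexp]
    field_simp
  -- bound on f₁
  have hbound : ∀ mu : ℝ, 0 < mu → |f₁ mu| ≤ (1 + d) / d * mu ^ (-α) := by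
    intro mu hmu
    have hmu0 := hmu.le
    have hFη := h1 (η * mu) (by positivity)
    have hFμ := h1 mu hmu0
    have e1 : Real.exp ((η - 1) * mu) * Real.exp mu = Real.exp (η * mu) := by
      rw [← Real.exp_add]; ring_nf
    have hE : (0:ℝ) < Real.exp (η * mu) := Real.exp_pos _
    have hE1 : (0:ℝ) < Real.exp ((η - 1) * mu) := Real.exp_pos _
    have hf : |f mu| ≤ (1 + d) * Real.exp (η * mu) := by
      have hfe : f mu = F (η * mu) - d * Real.exp ((η - 1) * mu) * F mu := by
        rw [h2 mu hmu0]; ring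
      have hb : d * Real.exp ((η - 1) * mu) * F mu ≤ d * Real.exp (η * mu) := by
        calc d * Real.exp ((η - 1) * mu) * F mu
            ≤ d * Real.exp ((η - 1) * mu) * Real.exp mu := by
              apply mul_le_mul_of_nonneg_left hFμ.2 (by positivity)
          _ = d * Real.exp (η * mu) := by rw [mul_assoc, e1]
      have hb0 : 0 ≤ d * Real.exp ((η - 1) * mu) * F mu := le_of_lt (mul_pos (mul_pos hd0 hE1) (lt_of_lt_of_le zero_lt_one hFμ.1))
      have hdE : 0 ≤ d * Real.exp (η * mu) := mul_nonneg hd0.le hE.le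
      rw [hfe, abs_le]
      constructor
      · linarith [hFη.1, hE.le]
      · linarith [hFη.2]
    have hpow : (0:ℝ) < mu ^ α := Real.rpow_pos_of_pos hmu α
    rw [hf₁, abs_div, abs_of_pos (by positivity : (0:ℝ) < d * mu ^ α * Real.exp (η * mu)),
      Real.rpow_neg hmu0, div_le_iff₀ (by positivity)]
    calc |f mu| ≤ (1 + d) * Real.exp (η * mu) := hf
      _ = (1 + d) / d * (mu ^ α)⁻¹ * (d * mu ^ α * Real.exp (η * mu)) := by
          field_simp
  -- powers
  have hpowd : ∀ n : ℕ, ((η : ℝ) ^ n) ^ α = d ^ n := by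
    intro n
    rw [← Real.rpow_natCast η n, ← Real.rpow_mul hη0.le, mul_comm,
      Real.rpow_mul hη0.le, hηα, Real.rpow_natCast]
  refine ⟨key, fun lam hlam => ?_⟩
  have hterm : ∀ n : ℕ, (lam / η ^ n) ^ (-α) = lam ^ (-α) * d ^ n := by
    intro n
    have hp : (0:ℝ) ≤ (η : ℝ) ^ n := pow_nonneg hη0.le n
    rw [Real.div_rpow hlam.le hp, Real.rpow_neg hp, div_eq_mul_inv, inv_inv, hpowd]
  -- summability
  have habs : Summable (fun k : ℕ => |f₁ (lam / η ^ (k + 1))|) := by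
    have hC : (0:ℝ) ≤ (1 + d) / d * lam ^ (-α) := by positivity
    refine Summable.of_nonneg_of_le (fun k => abs_nonneg _) (fun k => ?_)
      ((summable_geometric_of_lt_one hd0.le hd1).mul_left ((1 + d) / d * lam ^ (-α)))
    · 
      have h1' : |f₁ (lam / η ^ (k + 1))| ≤ (1 + d) / d * (lam / η ^ (k + 1)) ^ (-α) :=
        hbound _ (by positivity)
      rw [hterm (k + 1)] at h1'
      calc |f₁ (lam / η ^ (k + 1))| ≤ (1 + d) / d * (lam ^ (-α) * d ^ (k + 1)) := h1'
        _ = ((1 + d) / d * lam ^ (-α)) * d ^ k * d := by ring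
        _ ≤ ((1 + d) / d * lam ^ (-α)) * d ^ k * 1 := by
            apply mul_le_mul_of_nonneg_left hd1.le
            positivity
        _ = ((1 + d) / d * lam ^ (-α)) * d ^ k := by ring
  refine ⟨habs, ?_⟩
  -- telescoping partial sums
  have hpart : ∀ n : ℕ, F₁ lam =
      (∑ k ∈ Finset.range n, f₁ (lam / η ^ (k + 1))) + F₁ (lam / η ^ n) := by
    intro n
    induction n with
    | zero => simp
    | succ n ih =>
      rw [ih, Finset.sum_range_succ]
      have h := key (lam / η ^ (n + 1)) (by positivity)
      have heq : η * (lam / η ^ (n + 1)) = lam / η ^ n := by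
        field_simp [pow_succ]
        ring
      rw [heq] at h
      rw [h]; ring
  -- tail tends to zero
  have hF₁b : ∀ mu : ℝ, 0 < mu → 0 ≤ F₁ mu ∧ F₁ mu ≤ mu ^ (-α) := by
    intro mu hmu
    have hFμ := h1 mu hmu.le
    have hpow : (0:ℝ) < mu ^ α := Real.rpow_pos_of_pos hmu α
    have hE : (0:ℝ) < Real.exp mu := Real.exp_pos _
    constructor
    · rw [hF₁]
      exact div_nonneg (le_trans zero_le_one hFμ.1) (by positivity)
    · rw [hF₁, Real.rpow_neg hmu.le, div_le_iff₀ (by positivity)]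
      calc F mu ≤ Real.exp mu := hFμ.2
        _ = (mu ^ α)⁻¹ * (mu ^ α * Real.exp mu) := by field_simp
  have htail : Tendsto (fun n : ℕ => F₁ (lam / η ^ n)) atTop (nhds 0) := by
    apply squeeze_zero (fun n => (hF₁b _ (by positivity)).1)
      (fun n => le_trans (hF₁b _ (by positivity)).2 (le_of_eq (hterm n)))
    simpa using (tendsto_pow_atTop_nhds_zero_of_lt_one hd0.le hd1).const_mul (lam ^ (-α))
  -- conclude
  have hsum : Summable (fun k : ℕ => f₁ (lam / η ^ (k + 1))) := habs.of_abs
  have h1' : Tendsto (fun n : ℕ => ∑ k ∈ Finset.range n, f₁ (lam / η ^ (k + 1))) atTop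
      (nhds (∑' k : ℕ, f₁ (lam / η ^ (k + 1)))) := hsum.hasSum.tendsto_sum_nat
  have h2' : Tendsto (fun n : ℕ => ∑ k ∈ Finset.range n, f₁ (lam / η ^ (k + 1))) atTop
      (nhds (F₁ lam)) := by
    have := (tendsto_const_nhds (x := F₁ lam) (f := atTop (α := ℕ))).sub htail
    rw [sub_zero] at this
    apply this.congr
    intro n
    have := hpart n
    linarith
  exact tendsto_nhds_unique h2' h1'
end

section
/- For a regular generalized Cantor ladder with m steps, the recurrence relation for E becomes E(mλ) = Δ_1 · ((e^{mλ}−1)/(e^λ−1)) · E(λ) + Δ_2 · ((e^{(m−1)λ}−1)/(e^λ−1)) · e^λ for λ > 0. -/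
open Set Finset

lemma sum_range_two_mul' {M : Type*} [AddCommMonoid M] (v : ℕ → M) (n : ℕ) :
    ∑ i ∈ Finset.range (2 * n), v i = ∑ k ∈ Finset.range n, (v (2 * k) + v (2 * k + 1)) := by
  induction n with
  | zero => simp
  | succ n ih =>
    rw [Nat.mul_succ, Finset.sum_range_succ, Finset.sum_range_succ,
      Finset.sum_range_succ (fun k => v (2 * k) + v (2 * k + 1)), ih]
    abel

/-- For a regular ladder with `m` steps of width `Δ₁` and gaps of width `Δ₂`
(equal weights `1/m`), the recurrence for `E(λ) = ∫_0^1 e^{λ C(t)} dt` reads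
`E(mλ) = Δ₁ ((e^{mλ}-1)/(e^λ-1)) E(λ) + Δ₂ ((e^{(m-1)λ}-1)/(e^λ-1)) e^λ`
for `λ > 0`. Steps are indexed by `k = 0, …, m-1`: the `k`-th step is
`[k(Δ₁+Δ₂), k(Δ₁+Δ₂)+Δ₁]`. -/
theorem regularLadder_E_recurrence
    (m : ℕ) (Δ₁ Δ₂ : ℝ) (C : ℝ → ℝ)
    (hm : 2 ≤ m)
    (hΔ₁ : 0 < Δ₁) (hΔ₂ : 0 ≤ Δ₂)
    (htotal : m * Δ₁ + (m - 1 : ℝ) * Δ₂ = 1)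
    (hcont : ContinuousOn C (Set.Icc 0 1))
    (hstep : ∀ k < m, ∀ t ∈ Set.Icc (k * (Δ₁ + Δ₂)) (k * (Δ₁ + Δ₂) + Δ₁),
      C t = k / m + (1 / m) * C ((t - k * (Δ₁ + Δ₂)) / Δ₁))
    (hgap : ∀ k, k + 1 < m →
      ∀ t ∈ Set.Icc (k * (Δ₁ + Δ₂) + Δ₁) ((k + 1 : ℕ) * (Δ₁ + Δ₂)),
      C t = (k + 1 : ℕ) / m)
    (lam : ℝ) (hlam : 0 < lam) :
    (∫ t in (0:ℝ)..1, Real.exp (m * lam * C t)) =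
      Δ₁ * ((Real.exp (m * lam) - 1) / (Real.exp lam - 1)) *
        (∫ t in (0:ℝ)..1, Real.exp (lam * C t))
      + Δ₂ * ((Real.exp ((m - 1 : ℝ) * lam) - 1) / (Real.exp lam - 1)) *
        Real.exp lam := by
  have hmne : (m : ℝ) ≠ 0 := by
    have : (0:ℝ) < m := by exact_mod_cast Nat.lt_of_lt_of_le (by norm_num) hm
    exact this.ne'
  set q : ℝ := Δ₁ + Δ₂ with hq
  have hq0 : 0 < q := by rw [hq]; linarith
  set g : ℝ → ℝ := fun t => Real.exp (m * lam * C t) with hg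
  set E : ℝ := ∫ t in (0:ℝ)..1, Real.exp (lam * C t) with hE
  set a : ℕ → ℝ := fun i => ((i / 2 : ℕ) : ℝ) * q + ((i % 2 : ℕ) : ℝ) * Δ₁ with ha
  have haeven : ∀ k : ℕ, a (2 * k) = k * q := by
    intro k
    have h1 : (2 * k) / 2 = k := by omega
    have h2 : (2 * k) % 2 = 0 := by omega
    simp [ha, h1, h2]
  have haodd : ∀ k : ℕ, a (2 * k + 1) = k * q + Δ₁ := by
    intro k
    have h1 : (2 * k + 1) / 2 = k := by omega
    have h2 : (2 * k + 1) % 2 = 1 := by omega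
    simp [ha, h1, h2]
  have hstepmono : ∀ i, a i ≤ a (i + 1) := by
    intro i
    rcases Nat.even_or_odd i with ⟨k, hk⟩ | ⟨k, hk⟩
    · rw [hk, show k + k = 2 * k by ring, show 2 * k + 1 = 2 * k + 1 from rfl]
      rw [haeven, haodd]; linarith
    · rw [hk, show 2 * k + 1 + 1 = 2 * (k + 1) by ring, haodd, haeven]
      have : ((k : ℝ) + 1) * q = k * q + q := by ring
      push_cast
      rw [this]
      have : Δ₁ ≤ q := by rw [hq]; linarith
      linarith
  have hmono : Monotone a := monotone_nat_of_le_succ hstepmono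
  have ha0 : a 0 = 0 := by simp [ha]
  have hN : a (2 * m - 1) = 1 := by
    have h2m : 2 * m - 1 = 2 * (m - 1) + 1 := by omega
    rw [h2m, haodd]
    have hc : ((m - 1 : ℕ) : ℝ) = (m : ℝ) - 1 := by
      push_cast [Nat.cast_sub (show 1 ≤ m by omega)]; ring
    rw [hc, hq]
    linear_combination htotal
  have hbound : ∀ i ≤ 2 * m - 1, a i ∈ Set.Icc (0:ℝ) 1 :=
    fun i hi => ⟨ha0 ▸ hmono (Nat.zero_le i), hN ▸ hmono hi⟩
  have hgcont : ContinuousOn g (Set.Icc 0 1) :=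
    Real.continuous_exp.comp_continuousOn (continuousOn_const.mul hcont)
  have hint : ∀ i, i < 2 * m - 1 →
      IntervalIntegrable g MeasureTheory.volume (a i) (a (i + 1)) := by
    intro i hi
    apply (hgcont.mono ?_).intervalIntegrable
    rw [Set.uIcc_of_le (hstepmono i)]
    exact Set.Icc_subset_Icc (hbound i (by omega)).1 (hbound (i + 1) (by omega)).2
  have htot : ∑ i ∈ Finset.range (2 * m - 1), ∫ t in a i..a (i + 1), g t
      = ∫ t in (0:ℝ)..1, g t := by
    rw [intervalIntegral.sum_integral_adjacent_intervals hint, ha0, hN]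
  -- step integrals
  have hstepInt : ∀ k < m, (∫ t in a (2 * k)..a (2 * k + 1), g t)
      = Real.exp (k * lam) * (Δ₁ * E) := by
    intro k hk
    rw [haeven, haodd]
    have hcongr : Set.EqOn g
        (fun t => Real.exp (k * lam) * Real.exp (lam * C ((t - k * q) / Δ₁)))
        (Set.uIcc (k * q) (k * q + Δ₁)) := by
      intro t ht
      rw [Set.uIcc_of_le (by linarith)] at ht
      rw [hg]
      simp only
      rw [hstep k hk t ht, ← Real.exp_add]
      congr 1
      field_simp
    rw [intervalIntegral.integral_congr hcongr, intervalIntegral.integral_const_mul]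
    congr 1
    rw [intervalIntegral.integral_comp_sub_right
      (fun t => Real.exp (lam * C (t / Δ₁))) (k * q), sub_self, add_sub_cancel_left,
      intervalIntegral.integral_comp_div (fun t => Real.exp (lam * C t)) hΔ₁.ne',
      zero_div, div_self hΔ₁.ne', smul_eq_mul]
  -- gap integrals
  have hgapInt : ∀ k, k + 1 < m → (∫ t in a (2 * k + 1)..a (2 * k + 1 + 1), g t)
      = Real.exp lam ^ (k + 1) * Δ₂ := by
    intro k hk
    rw [show 2 * k + 1 + 1 = 2 * (k + 1) by ring, haodd, haeven]
    have hle : k * q + Δ₁ ≤ ((k + 1 : ℕ) : ℝ) * q := by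
      push_cast
      have : ((k : ℝ) + 1) * q = k * q + q := by ring
      rw [this]
      have : Δ₁ ≤ q := by rw [hq]; linarith
      linarith
    have hcongr : Set.EqOn g (fun _ => Real.exp lam ^ (k + 1))
        (Set.uIcc (k * q + Δ₁) (((k + 1 : ℕ) : ℝ) * q)) := by
      intro t ht
      rw [Set.uIcc_of_le hle] at ht
      rw [hg]
      simp only
      rw [hgap k hk t ht, ← Real.exp_nat_mul]
      congr 1
      field_simp
    rw [intervalIntegral.integral_congr hcongr, intervalIntegral.integral_const,
      smul_eq_mul]
    have : ((k + 1 : ℕ) : ℝ) * q - (k * q + Δ₁) = Δ₂ := by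
      push_cast; rw [hq]; ring
    rw [this, mul_comm]
  -- assemble
  set x : ℝ := Real.exp lam with hx
  have hx1 : x ≠ 1 := by
    have h := Real.add_one_le_exp lam
    rw [hx]; intro h1; rw [h1] at h; linarith
  have key : (∫ t in (0:ℝ)..1, g t)
      = Δ₁ * E * ∑ k ∈ Finset.range m, x ^ k
        + Δ₂ * x * ∑ k ∈ Finset.range (m - 1), x ^ k := by
    rw [← htot, show 2 * m - 1 = 2 * (m - 1) + 1 by omega, Finset.sum_range_succ,
      sum_range_two_mul' (fun i => ∫ t in a i..a (i + 1), g t)]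
    have hsum : ∑ k ∈ Finset.range (m - 1),
        ((∫ t in a (2 * k)..a (2 * k + 1), g t) + ∫ t in a (2 * k + 1)..a (2 * k + 1 + 1), g t)
        = ∑ k ∈ Finset.range (m - 1), (x ^ k * (Δ₁ * E) + x ^ (k + 1) * Δ₂) := by
      refine Finset.sum_congr rfl fun k hk => ?_
      have hk' : k < m - 1 := Finset.mem_range.mp hk
      rw [hstepInt k (by omega), hgapInt k (by omega), Real.exp_nat_mul]
    have hlast : (∫ t in a (2 * (m - 1))..a (2 * (m - 1) + 1), g t)
        = x ^ (m - 1) * (Δ₁ * E) := by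
      rw [hstepInt (m - 1) (by omega), Real.exp_nat_mul]
    rw [hsum, hlast, Finset.sum_add_distrib]
    have hmsplit : ∑ k ∈ Finset.range m, x ^ k
        = (∑ k ∈ Finset.range (m - 1), x ^ k) + x ^ (m - 1) := by
      conv_lhs => rw [show m = m - 1 + 1 by omega]
      rw [Finset.sum_range_succ]
    have hshift : ∑ k ∈ Finset.range (m - 1), x ^ (k + 1) * Δ₂
        = Δ₂ * x * ∑ k ∈ Finset.range (m - 1), x ^ k := by
      rw [Finset.mul_sum]
      refine Finset.sum_congr rfl fun k _ => ?_
      rw [pow_succ]; ring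
    rw [hmsplit, hshift, ← Finset.sum_mul]
    ring
  have hgeom1 : ∑ k ∈ Finset.range m, x ^ k = (x ^ m - 1) / (x - 1) := geom_sum_eq hx1 m
  have hgeom2 : ∑ k ∈ Finset.range (m - 1), x ^ k = (x ^ (m - 1) - 1) / (x - 1) :=
    geom_sum_eq hx1 (m - 1)
  have hx_m : Real.exp (m * lam) = x ^ m := Real.exp_nat_mul lam m
  have hx_m1 : Real.exp ((m - 1 : ℝ) * lam) = x ^ (m - 1) := by
    rw [show ((m : ℝ) - 1) = ((m - 1 : ℕ) : ℝ) by
      push_cast [Nat.cast_sub (show 1 ≤ m by omega)]; ring]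
    exact Real.exp_nat_mul lam (m - 1)
  rw [show (∫ t in (0:ℝ)..1, Real.exp (m * lam * C t)) = ∫ t in (0:ℝ)..1, g t from rfl,
    key, hgeom1, hgeom2, hx_m, hx_m1]
  ring
end

section
/- For a non-degenerate regular ladder with m steps, the n-th Fourier coefficient of the periodic function Φ in the asymptotics E(λ) = Φ(log_m λ)λ^α e^λ + O(1) equals c_n = (Δ_2(1−Δ_1)/(Δ_1 ln m)) · Γ(α_n) ζ(α_n), where α_n = −α − 2πin/ln m and α = log_m Δ_1. -/
/-!
Substituting `t = m ^ (k + x)` turns the `n`-th Fourier coefficient of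
`Φ(x) = ∑ₖ f̃₁(m ^ (k + x))` into `(ln m)⁻¹` times the Mellin transform of `f̃₁` at
`-2πin / ln m`. On `t > 0`, `f̃₁(t) = (Δ₂ / Δ₁) t ^ (-α) (1 / (eᵗ - 1) - 1 / (e^{mt} - 1))`,
so this is `Δ₂ / (Δ₁ ln m)` times the Mellin transform of the bracket at `αₙ`. Expanding
`1 / (eᵗ - 1) = ∑ⱼ e^{-(j+1)t}` gives the Mellin transform `Γ(s) ζ(s)`, the rescaling
`t ↦ mt` multiplies it by `m ^ (-s)`, and `m ^ (-αₙ) = Δ₁`. Everything converges because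
`Re αₙ = -α > 1`, i.e. `m Δ₁ < 1`.
-/

open MeasureTheory Real Complex

/-- `f̃₁(λ) = Δ₂(e^{(m-1)λ}-1)e^λ / (Δ₁(e^λ-1)(e^{mλ}-1)λ^α)` with
`α = log_m Δ₁`. -/
noncomputable def ftildeReg (m : ℕ) (Δ₁ Δ₂ : ℝ) (lam : ℝ) : ℝ :=
  Δ₂ * (Real.exp ((m - 1 : ℝ) * lam) - 1) * Real.exp lam /
    (Δ₁ * (Real.exp lam - 1) * (Real.exp (m * lam) - 1) *
      lam ^ (Real.log Δ₁ / Real.log m))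

/-- The `1`-periodic function `Φ(x) = ∑_{k ∈ ℤ} f̃₁(m^{k+x})` of a regular
ladder. -/
noncomputable def PhiReg (m : ℕ) (Δ₁ Δ₂ : ℝ) (x : ℝ) : ℝ :=
  ∑' k : ℤ, ftildeReg m Δ₁ Δ₂ ((m : ℝ) ^ ((k : ℝ) + x))

open Set

section Mellin

variable {E : Type*} [NormedAddCommGroup E] [NormedSpace ℂ E]

theorem MeasureTheory.Integrable.intervalIntegral_tsum_comp_add_int [CompleteSpace E]
    {F : ℝ → E} (hF : Integrable F) :
    ∫ x in (0:ℝ)..1, ∑' k : ℤ, F (x + k) = ∫ x, F x := by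
  have hint (k : ℤ) : IntegrableOn (fun x ↦ F (x + k)) (Ioc 0 1) :=
    (hF.comp_add_right (k : ℝ)).integrableOn
  have hnorm : Summable fun k : ℤ ↦ ∫ x in Ioc (0:ℝ) 1, ‖F (x + k)‖ := by
    simpa only [intervalIntegral.integral_of_le zero_le_one] using
      hF.norm.hasSum_intervalIntegral_comp_add_int.summable
  rw [intervalIntegral.integral_of_le zero_le_one,
    integral_tsum (fun k ↦ (hint k).aestronglyMeasurable)]
  · simpa only [intervalIntegral.integral_of_le zero_le_one] using
      hF.hasSum_intervalIntegral_comp_add_int.tsum_eq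
  · simp_rw [← ofReal_integral_norm_eq_lintegral_enorm (hint _)]
    rw [← ENNReal.ofReal_tsum_of_nonneg (fun _ ↦ integral_nonneg fun _ ↦ norm_nonneg _) hnorm]
    exact ENNReal.ofReal_ne_top

variable {L : ℝ}

lemma image_univ_exp_const_mul (hL : 0 < L) : (fun y ↦ rexp (L * y)) '' univ = Ioi 0 := by
  rw [image_univ, ← Real.range_exp]
  exact (mul_left_surjective₀ hL.ne').range_comp rexp

lemma hasDerivWithinAt_exp_const_mul (y : ℝ) :
    HasDerivWithinAt (fun y ↦ rexp (L * y)) (L * rexp (L * y)) univ y := by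
  simpa [mul_comm L] using ((hasDerivAt_id' y).const_mul L).exp

lemma injOn_exp_const_mul (hL : 0 < L) : InjOn (fun y ↦ rexp (L * y)) univ :=
  (Real.exp_injective.comp (mul_right_injective₀ hL.ne')).injOn

theorem integral_Ioi_eq_integral_comp_exp_const_mul (hL : 0 < L) (g : ℝ → E) :
    ∫ t in Ioi 0, g t = ∫ y, (L * rexp (L * y)) • g (rexp (L * y)) := by
  rw [← image_univ_exp_const_mul hL, integral_image_eq_integral_abs_deriv_smul MeasurableSet.univ
    (fun y _ ↦ hasDerivWithinAt_exp_const_mul y) (injOn_exp_const_mul hL), setIntegral_univ]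
  simp only [abs_of_pos (mul_pos hL (Real.exp_pos _))]

theorem integrableOn_Ioi_iff_integrable_comp_exp_const_mul (hL : 0 < L) (g : ℝ → E) :
    IntegrableOn g (Ioi 0) ↔ Integrable fun y ↦ (L * rexp (L * y)) • g (rexp (L * y)) := by
  rw [← image_univ_exp_const_mul hL, integrableOn_image_iff_integrableOn_abs_deriv_smul
    MeasurableSet.univ (fun y _ ↦ hasDerivWithinAt_exp_const_mul y) (injOn_exp_const_mul hL),
    integrableOn_univ]
  simp only [abs_of_pos (mul_pos hL (Real.exp_pos _))]

lemma mul_exp_smul_cpow_smul (s : ℂ) (y : ℝ) (v : E) :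
    (L * rexp (L * y)) • ((rexp (L * y) : ℂ) ^ (s - 1) • v) =
      L • (cexp (L * s * y) • v) := by
  have hexp : (rexp (L * y) : ℂ) * (rexp (L * y) : ℂ) ^ (s - 1) = cexp (L * s * y) := by
    rw [cpow_def_of_ne_zero (ofReal_ne_zero.mpr (Real.exp_pos _).ne'),
      ← ofReal_log (Real.exp_pos _).le, Real.log_exp, ofReal_exp, ← Complex.exp_add]
    push_cast
    ring_nf
  rw [mul_smul, ← Complex.coe_smul (rexp _), smul_smul, hexp]

theorem mellin_eq_integral_comp_exp_const_mul (hL : 0 < L) (f : ℝ → E) (s : ℂ) :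
    mellin f s = L • ∫ y : ℝ, cexp (L * s * y) • f (rexp (L * y)) := by
  simp only [mellin, integral_Ioi_eq_integral_comp_exp_const_mul hL, mul_exp_smul_cpow_smul,
    integral_smul]

theorem mellinConvergent_iff_integrable_comp_exp_const_mul (hL : 0 < L) (f : ℝ → E) (s : ℂ) :
    MellinConvergent f s ↔ Integrable fun y : ℝ ↦ cexp (L * s * y) • f (rexp (L * y)) := by
  simp only [MellinConvergent, integrableOn_Ioi_iff_integrable_comp_exp_const_mul hL,
    mul_exp_smul_cpow_smul]
  exact integrable_smul_iff hL.ne' _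

theorem HasMellin.cpow_smul {f : ℝ → E} {s : ℂ} {m : E} (h : HasMellin f s m) (a : ℂ) :
    HasMellin (fun t ↦ (t : ℂ) ^ a • f t) (s - a) m :=
  ⟨MellinConvergent.cpow_smul.mpr (by rw [sub_add_cancel]; exact h.1),
    by rw [mellin_cpow_smul, sub_add_cancel, h.2]⟩

theorem HasMellin.const_smul {f : ℝ → E} {s : ℂ} {m : E} (h : HasMellin f s m) (c : ℂ) :
    HasMellin (fun t ↦ c • f t) s (c • m) :=
  h.2 ▸ hasMellin_const_smul h.1 c

theorem HasMellin.congr_Ioi {f g : ℝ → E} {s : ℂ} {m : E} (h : HasMellin f s m)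
    (hfg : EqOn f g (Ioi 0)) : HasMellin g s m := by
  have hint : EqOn (fun t : ℝ ↦ (t : ℂ) ^ (s - 1) • f t) (fun t ↦ (t : ℂ) ^ (s - 1) • g t)
      (Ioi 0) := fun t ht ↦ by simp only [hfg ht]
  exact ⟨(integrableOn_congr_fun hint measurableSet_Ioi).mp h.1,
    h.2 ▸ (setIntegral_congr_fun measurableSet_Ioi hint).symm⟩

end Mellin

theorem intervalIntegral_tsum_comp_rpow_mul_exp_eq_mellin {b : ℝ} (hb : 1 < b) {f : ℝ → ℂ}
    {n : ℤ} (hf : MellinConvergent f (-2 * π * I * n / Real.log b)) :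
    ∫ x in (0:ℝ)..1, (∑' k : ℤ, f (b ^ ((k:ℝ) + x))) * cexp (-2 * π * I * n * x) =
      mellin f (-2 * π * I * n / Real.log b) / Real.log b := by
  set L := Real.log b
  have hL : 0 < L := Real.log_pos hb
  set w : ℂ := -2 * π * I * n / L
  set F : ℝ → ℂ := fun y ↦ cexp (L * w * y) • f (rexp (L * y))
  have hLw (y : ℝ) : (L : ℂ) * w * y = -2 * π * I * n * y := by
    simp only [w]; field_simp [ofReal_ne_zero.mpr hL.ne']
  have hperiodic (x : ℝ) :
      (∑' k : ℤ, f (b ^ ((k:ℝ) + x))) * cexp (-2 * π * I * n * x) = ∑' k : ℤ, F (x + k) := by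
    rw [← tsum_mul_right]
    congr 1 with k
    have hfourier : cexp (-2 * π * I * n * ↑(x + k)) = cexp (-2 * π * I * n * x) := by
      rw [show -2 * π * I * n * ↑(x + k) = -2 * π * I * n * x + ↑(-(n * k)) * (2 * π * I) by
        push_cast; ring, Complex.exp_add, Complex.exp_int_mul_two_pi_mul_I, mul_one]
    rw [rpow_def_of_pos (zero_lt_one.trans hb), add_comm (k : ℝ)]
    change _ = cexp (L * w * ↑(x + k)) • f (rexp (L * (x + k)))
    rw [hLw, hfourier, smul_eq_mul, mul_comm]
  have hF : Integrable F := (mellinConvergent_iff_integrable_comp_exp_const_mul hL f w).mp hf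
  calc _ = ∫ x in (0:ℝ)..1, ∑' k : ℤ, F (x + k) := by simp only [hperiodic]
    _ = ∫ y, F y := hF.intervalIntegral_tsum_comp_add_int
    _ = mellin f w / L := by
      rw [mellin_eq_integral_comp_exp_const_mul hL, Complex.real_smul,
        mul_div_cancel_left₀ _ (ofReal_ne_zero.mpr hL.ne')]

noncomputable def invExpSubOne (t : ℝ) : ℂ := ((rexp t - 1)⁻¹ : ℝ)

lemma hasSum_exp_neg_nat_succ_mul {t : ℝ} (ht : 0 < t) :
    HasSum (fun j : ℕ ↦ rexp (-(j + 1) * t)) (rexp t - 1)⁻¹ := by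
  have hq : rexp (-t) < 1 := Real.exp_lt_one_iff.mpr (neg_lt_zero.mpr ht)
  have hgeom := (hasSum_geometric_of_lt_one (Real.exp_pos _).le hq).mul_left (rexp (-t))
  rw [show rexp (-t) * (1 - rexp (-t))⁻¹ = (rexp t - 1)⁻¹ by
    rw [Real.exp_neg]; field_simp [(sub_pos.mpr (Real.one_lt_exp_iff.mpr ht)).ne']] at hgeom
  refine hgeom.congr_fun fun j ↦ ?_
  rw [← Real.exp_nat_mul, ← Real.exp_add]
  ring_nf

lemma mellin_invExpSubOne {s : ℂ} (hs : 1 < s.re) :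
    mellin invExpSubOne s = Gamma s * riemannZeta s := by
  have hsum := hasSum_mellin (a := fun _ : ℕ ↦ 1) (p := fun j ↦ j + 1) (F := invExpSubOne)
    (fun j ↦ Or.inr j.cast_add_one_pos) (zero_lt_one.trans hs)
    (fun t ht ↦ by
      simpa [invExpSubOne] using Complex.hasSum_ofReal.mpr (hasSum_exp_neg_nat_succ_mul ht))
    (by simpa using (summable_nat_add_iff 1).mpr (Real.summable_one_div_nat_rpow.mpr hs))
  rw [← hsum.tsum_eq, zeta_eq_tsum_one_div_nat_add_one_cpow hs, ← tsum_mul_left]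
  simp [div_eq_mul_inv]

lemma mellinConvergent_invExpSubOne {s : ℂ} (hs : 1 < s.re) :
    MellinConvergent invExpSubOne s := by
  have hσ : 1 < (s.re : ℂ).re := by simpa using hs
  -- A non-integrable function has Mellin integral `0`, whereas `Γ(Re s) ζ(Re s) ≠ 0`.
  have hreal : MellinConvergent invExpSubOne s.re := by
    refine Integrable.of_integral_ne_zero ?_
    rw [← mellin, mellin_invExpSubOne hσ]
    exact mul_ne_zero (Gamma_ne_zero_of_re_pos (zero_lt_one.trans hσ))
      (riemannZeta_ne_zero_of_one_lt_re hσ)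
  have hmeas : AEStronglyMeasurable invExpSubOne (volume.restrict (Ioi 0)) := by
    unfold invExpSubOne; fun_prop
  rw [MellinConvergent, mellin_convergent_iff_norm subset_rfl measurableSet_Ioi hmeas] at hreal ⊢
  simpa using hreal

theorem hasMellin_invExpSubOne_sub_comp_mul {c : ℝ} (hc : 0 < c) {s : ℂ} (hs : 1 < s.re) :
    HasMellin (fun t ↦ invExpSubOne t - invExpSubOne (c * t)) s
      ((1 - (c : ℂ) ^ (-s)) * (Gamma s * riemannZeta s)) := by
  have hconv := mellinConvergent_invExpSubOne hs
  obtain ⟨hconv', hval⟩ := hasMellin_sub hconv ((MellinConvergent.comp_mul_left hc).mpr hconv)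
  refine ⟨hconv', ?_⟩
  rw [hval, mellin_comp_mul_left _ _ hc, mellin_invExpSubOne hs, smul_eq_mul]
  ring

lemma one_lt_neg_logb_of_mul_lt_one {b x : ℝ} (hb : 1 < b) (hx : 0 < x) (hbx : b * x < 1) :
    1 < -Real.logb b x := by
  have hlog : Real.log x < -Real.log b := by
    rw [← Real.log_inv]
    exact Real.log_lt_log hx (by rw [← one_div, lt_div_iff₀ (by linarith)]; linarith)
  rw [Real.logb, lt_neg, div_lt_iff₀ (Real.log_pos hb)]
  linarith

lemma ofReal_cpow_logb_add_int_mul {b x : ℝ} (hb : 0 < b) (hb1 : b ≠ 1) (hx : 0 < x) (n : ℤ) :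
    (b : ℂ) ^ ((Real.logb b x : ℂ) + 2 * π * I * n / Real.log b) = x := by
  have hL : (Real.log b : ℂ) ≠ 0 := ofReal_ne_zero.mpr (Real.log_ne_zero_of_pos_of_ne_one hb hb1)
  rw [cpow_def_of_ne_zero (ofReal_ne_zero.mpr hb.ne'), ← ofReal_log hb.le,
    show (Real.log b : ℂ) * ((Real.logb b x : ℂ) + 2 * π * I * n / Real.log b) =
      Real.log x + n * (2 * π * I) by rw [Real.logb]; push_cast; field_simp,
    Complex.exp_add, Complex.exp_int_mul_two_pi_mul_I, mul_one, ← ofReal_exp, Real.exp_log hx]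

lemma ftildeReg_eq_of_pos {m : ℕ} (hm : m ≠ 0) {Δ₁ : ℝ} (hΔ₁ : Δ₁ ≠ 0) (Δ₂ : ℝ) {t : ℝ}
    (ht : 0 < t) :
    ftildeReg m Δ₁ Δ₂ t =
      Δ₂ / Δ₁ * t ^ (-Real.logb m Δ₁) * ((rexp t - 1)⁻¹ - (rexp (m * t) - 1)⁻¹) := by
  have hmt : 0 < (m : ℝ) * t := mul_pos (by positivity) ht
  have he₁ : rexp t - 1 ≠ 0 := (sub_pos.mpr (Real.one_lt_exp_iff.mpr ht)).ne'
  have he₂ : rexp (m * t) - 1 ≠ 0 := (sub_pos.mpr (Real.one_lt_exp_iff.mpr hmt)).ne'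
  have hexp : rexp ((m - 1 : ℝ) * t) * rexp t = rexp (m * t) := by rw [← Real.exp_add]; ring_nf
  rw [ftildeReg, Real.rpow_neg ht.le, ← Real.logb]
  have : t ^ Real.logb m Δ₁ ≠ 0 := (Real.rpow_pos_of_pos ht _).ne'
  field_simp
  linear_combination Δ₂ * hexp

theorem hasMellin_ftildeReg {m : ℕ} (hm : m ≠ 0) {Δ₁ : ℝ} (hΔ₁ : Δ₁ ≠ 0) (Δ₂ : ℝ) {s : ℂ}
    (hs : 1 < s.re) :
    HasMellin (fun t ↦ (ftildeReg m Δ₁ Δ₂ t : ℂ)) (s - (-Real.logb m Δ₁ : ℝ))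
      ((Δ₂ / Δ₁ : ℝ) * ((1 - ((m : ℝ) : ℂ) ^ (-s)) * (Gamma s * riemannZeta s))) := by
  refine (((hasMellin_invExpSubOne_sub_comp_mul (by positivity) hs).cpow_smul _).const_smul
    (Δ₂ / Δ₁ : ℝ)).congr_Ioi fun t ht ↦ ?_
  simp only [ftildeReg_eq_of_pos hm hΔ₁ Δ₂ ht, invExpSubOne, ← ofReal_cpow ht.le]
  push_cast
  ring

/-- For a non-degenerate regular ladder, the `n`-th Fourier coefficient of
`Φ` equals `c_n = (Δ₂(1-Δ₁)/(Δ₁ ln m)) Γ(α_n) ζ(α_n)` with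
`α_n = -α - 2πin/ln m`, `α = log_m Δ₁`. -/
theorem regularLadder_fourier_coefficients (m : ℕ) (Δ₁ Δ₂ : ℝ)
    (hm : 2 ≤ m) (hΔ₁ : 0 < Δ₁) (hΔ₂ : 0 < Δ₂)
    (htotal : m * Δ₁ + (m - 1 : ℝ) * Δ₂ = 1) (n : ℤ) :
    (∫ s in (0:ℝ)..1,
        (PhiReg m Δ₁ Δ₂ s : ℂ) * Complex.exp (-2 * Real.pi * Complex.I * n * s)) =
      ((Δ₂ * (1 - Δ₁) / (Δ₁ * Real.log m) : ℝ) : ℂ) *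
        Complex.Gamma ((-(Real.log Δ₁ / Real.log m) : ℝ) -
          2 * Real.pi * Complex.I * n / (Real.log m : ℝ)) *
        riemannZeta ((-(Real.log Δ₁ / Real.log m) : ℝ) -
          2 * Real.pi * Complex.I * n / (Real.log m : ℝ)) := by
  set αₙ : ℂ := (-(Real.log Δ₁ / Real.log m) : ℝ) - 2 * π * I * n / (Real.log m : ℝ)
  have hm₁ : (1 : ℝ) < m := by exact_mod_cast hm
  have hmΔ₁ : m * Δ₁ < 1 := by
    have : 0 < (m - 1 : ℝ) * Δ₂ := mul_pos (by linarith) hΔ₂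
    linarith
  have hαₙ : 1 < αₙ.re := by
    simp only [αₙ, sub_re, ofReal_re, Complex.div_ofReal_re]
    simpa [Real.logb] using one_lt_neg_logb_of_mul_lt_one hm₁ hΔ₁ hmΔ₁
  have hfreq : αₙ - (-Real.logb m Δ₁ : ℝ) = -2 * π * I * n / Real.log m := by
    rw [Real.logb]; ring
  have hΔ₁_eq : ((m : ℝ) : ℂ) ^ (-αₙ) = Δ₁ := by
    rw [← ofReal_cpow_logb_add_int_mul (by positivity) hm₁.ne' hΔ₁ n]
    congr 1
    simp only [αₙ, Real.logb, ofReal_neg, ofReal_div]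
    ring
  obtain ⟨hconv, hval⟩ := hfreq ▸ hasMellin_ftildeReg (by omega) hΔ₁.ne' Δ₂ hαₙ
  simp_rw [PhiReg, ofReal_tsum]
  rw [intervalIntegral_tsum_comp_rpow_mul_exp_eq_mellin hm₁ hconv, hval, hΔ₁_eq]
  have : (Real.log m : ℂ) ≠ 0 := ofReal_ne_zero.mpr (Real.log_pos hm₁).ne'
  push_cast
  field_simp
end

section
/- Let m = 2 and ρ_1 = ρ_2 = 1/2. Then E satisfies E(2λ) = E(λ)(Δ_1 + Δ_3 e^λ) + Δ_2 e^λ for all λ, where Δ_1 = b_1, Δ_2 = a_2 − b_1, Δ_3 = 1 − a_2. -/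
open Set

/-- For the two-step ladder (`m = 2`, `ρ₁ = ρ₂ = 1/2`) with steps
`[0, b₁]`, `[a₂, 1]`, the function `E(λ) = ∫_0^1 e^{λ C(t)} dt` satisfies
`E(2λ) = E(λ)(Δ₁ + Δ₃ e^λ) + Δ₂ e^λ`, where `Δ₁ = b₁`, `Δ₂ = a₂ - b₁`,
`Δ₃ = 1 - a₂`. -/
theorem twoStepLadder_E_recurrence (b₁ a₂ : ℝ) (C : ℝ → ℝ)
    (hb₁ : 0 < b₁) (hba : b₁ ≤ a₂) (ha₂ : a₂ < 1)
    (hcont : ContinuousOn C (Set.Icc 0 1))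
    (hstep₁ : ∀ t ∈ Set.Icc (0:ℝ) b₁, C t = C (t / b₁) / 2)
    (hgap : ∀ t ∈ Set.Icc b₁ a₂, C t = 1 / 2)
    (hstep₂ : ∀ t ∈ Set.Icc a₂ 1, C t = 1 / 2 + C ((t - a₂) / (1 - a₂)) / 2)
    (lam : ℝ) :
    (∫ t in (0:ℝ)..1, Real.exp (2 * lam * C t)) =
      (∫ t in (0:ℝ)..1, Real.exp (lam * C t)) * (b₁ + (1 - a₂) * Real.exp lam)
      + (a₂ - b₁) * Real.exp lam := by
  have hb₁' : b₁ ≠ 0 := ne_of_gt hb₁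
  have hΔ₃ : (0:ℝ) < 1 - a₂ := by linarith
  have hΔ₃' : (1 - a₂) ≠ 0 := ne_of_gt hΔ₃
  set f : ℝ → ℝ := fun t => Real.exp (lam * C t) with hf
  set g : ℝ → ℝ := fun t => Real.exp (2 * lam * C t) with hg
  have hgc : ContinuousOn g (Set.Icc 0 1) :=
    Real.continuous_exp.comp_continuousOn (continuousOn_const.mul hcont)
  have hsub1 : Set.Icc (0:ℝ) b₁ ⊆ Set.Icc (0:ℝ) 1 :=
    Set.Icc_subset_Icc le_rfl (by linarith)
  have hsub2 : Set.Icc b₁ a₂ ⊆ Set.Icc (0:ℝ) 1 :=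
    Set.Icc_subset_Icc (le_of_lt hb₁) (le_of_lt ha₂)
  have hsub3 : Set.Icc a₂ (1:ℝ) ⊆ Set.Icc (0:ℝ) 1 :=
    Set.Icc_subset_Icc (by linarith) le_rfl
  have hint1 : IntervalIntegrable g MeasureTheory.volume 0 b₁ :=
    (hgc.mono hsub1).intervalIntegrable_of_Icc (le_of_lt hb₁)
  have hint2 : IntervalIntegrable g MeasureTheory.volume b₁ a₂ :=
    (hgc.mono hsub2).intervalIntegrable_of_Icc hba
  have hint3 : IntervalIntegrable g MeasureTheory.volume a₂ 1 :=
    (hgc.mono hsub3).intervalIntegrable_of_Icc (le_of_lt ha₂)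
  have hsplit : (∫ t in (0:ℝ)..1, g t) =
      (∫ t in (0:ℝ)..b₁, g t) + (∫ t in b₁..a₂, g t) + (∫ t in a₂..1, g t) := by
    rw [intervalIntegral.integral_add_adjacent_intervals hint1 hint2,
      intervalIntegral.integral_add_adjacent_intervals (hint1.trans hint2) hint3]
  have hA : (∫ t in (0:ℝ)..b₁, g t) = b₁ * ∫ t in (0:ℝ)..1, f t := by
    have h1 : (∫ t in (0:ℝ)..b₁, g t) = ∫ t in (0:ℝ)..b₁, f (t / b₁) := by
      apply intervalIntegral.integral_congr
      intro t ht
      rw [Set.uIcc_of_le (le_of_lt hb₁)] at ht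
      simp only [hg, hf]
      rw [hstep₁ t ht]; ring_nf
    rw [h1, intervalIntegral.integral_comp_div f hb₁', zero_div, div_self hb₁',
      smul_eq_mul]
  have hB : (∫ t in b₁..a₂, g t) = (a₂ - b₁) * Real.exp lam := by
    have h1 : (∫ t in b₁..a₂, g t) = ∫ _t in b₁..a₂, Real.exp lam := by
      apply intervalIntegral.integral_congr
      intro t ht
      rw [Set.uIcc_of_le hba] at ht
      simp only [hg]
      rw [hgap t ht]; ring_nf
    rw [h1, intervalIntegral.integral_const, smul_eq_mul]
  have hD : (∫ t in a₂..1, g t) =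
      Real.exp lam * ((1 - a₂) * ∫ t in (0:ℝ)..1, f t) := by
    have h1 : (∫ t in a₂..1, g t) =
        ∫ t in a₂..1, Real.exp lam * f ((t - a₂) / (1 - a₂)) := by
      apply intervalIntegral.integral_congr
      intro t ht
      rw [Set.uIcc_of_le (le_of_lt ha₂)] at ht
      simp only [hg, hf]
      rw [hstep₂ t ht, ← Real.exp_add]; ring_nf
    rw [h1, intervalIntegral.integral_const_mul,
      intervalIntegral.integral_comp_sub_right (fun t => f (t / (1 - a₂))) a₂,
      sub_self, intervalIntegral.integral_comp_div f hΔ₃', zero_div,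
      div_self hΔ₃', smul_eq_mul]
  calc (∫ t in (0:ℝ)..1, g t)
      = (∫ t in (0:ℝ)..b₁, g t) + (∫ t in b₁..a₂, g t) + (∫ t in a₂..1, g t) :=
        hsplit
    _ = (∫ t in (0:ℝ)..1, f t) * (b₁ + (1 - a₂) * Real.exp lam)
        + (a₂ - b₁) * Real.exp lam := by rw [hA, hB, hD]; ring
end

section
/- The coefficients defined by C_0 = −Δ_2/Δ_3, D_0 = −Δ_1/Δ_3, and the recursions C_{k+1} = −(Δ_1/Δ_3)C_k for odd k, C_{k+1} = C_{k/2}/Δ_3 − (Δ_1/Δ_3)C_k for even k, D_{k+1} = −(Δ_1/Δ_3)D_k for odd k, D_{k+1} = D_{k/2} − (Δ_1/Δ_3)D_k for even k, satisfy |C_k| ≤ |C_0|(2/Δ_3)^k and |D_k| ≤ |D_0|(2/Δ_3)^k for all k ≥ 0. -/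
/-! Both recursions give `|x (n+1)| ≤ a |x (n/2)| + b |x n|` with `a + b ≤ 2/Δ₃` (the odd
case is the even one with the `x (n/2)` term dropped). Since `r = 2/Δ₃ ≥ 1`, the bound
`r ^ (n/2) ≤ r ^ n` lets strong induction close with `(a + b) r ^ n ≤ r ^ (n+1)`. -/

theorem le_mul_pow_of_succ_le_mul_half_add_mul {u : ℕ → ℝ} {a b r : ℝ} (hu₀ : 0 ≤ u 0)
    (ha : 0 ≤ a) (hb : 0 ≤ b) (hr : 1 ≤ r) (hab : a + b ≤ r)
    (hu : ∀ n, u (n + 1) ≤ a * u (n / 2) + b * u n) (k : ℕ) :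
    u k ≤ u 0 * r ^ k := by
  induction k using Nat.strong_induction_on with
  | _ k ih =>
    obtain _ | n := k
    · simp
    have hhalf : u (n / 2) ≤ u 0 * r ^ n :=
      (ih _ (Nat.lt_succ_of_le (Nat.div_le_self n 2))).trans <|
        mul_le_mul_of_nonneg_left (pow_le_pow_right₀ hr (Nat.div_le_self n 2)) hu₀
    have hprev : u n ≤ u 0 * r ^ n := ih n n.lt_succ_self
    calc u (n + 1) ≤ a * u (n / 2) + b * u n := hu n
      _ ≤ a * (u 0 * r ^ n) + b * (u 0 * r ^ n) := by gcongr
      _ = (a + b) * (u 0 * r ^ n) := by ring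
      _ ≤ r * (u 0 * r ^ n) := by gcongr
      _ = u 0 * r ^ (n + 1) := by ring

theorem abs_succ_le_of_parity_recursion {x : ℕ → ℝ} {a b : ℝ} (ha : 0 ≤ a) (hb : 0 ≤ b)
    (hodd : ∀ k, Odd k → x (k + 1) = -b * x k)
    (heven : ∀ k, Even k → x (k + 1) = a * x (k / 2) - b * x k) (n : ℕ) :
    |x (n + 1)| ≤ a * |x (n / 2)| + b * |x n| := by
  rcases Nat.even_or_odd n with hn | hn
  · calc |x (n + 1)| = |a * x (n / 2) - b * x n| := by rw [heven n hn]
      _ ≤ |a * x (n / 2)| + |b * x n| := abs_sub _ _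
      _ = a * |x (n / 2)| + b * |x n| := by
        rw [abs_mul, abs_mul, abs_of_nonneg ha, abs_of_nonneg hb]
  · rw [hodd n hn, abs_mul, abs_neg, abs_of_nonneg hb]
    exact le_add_of_nonneg_left (by positivity)

theorem twoStep_coefficients_growth_general (Δ₁ Δ₂ Δ₃ : ℝ) (Cs Ds : ℕ → ℝ)
    (hΔ₁ : 0 < Δ₁) (hΔ₂ : 0 < Δ₂) (hΔ₃ : 0 < Δ₃)
    (htotal : Δ₁ + Δ₂ + Δ₃ = 1)
    (hCodd : ∀ k, Odd k → Cs (k + 1) = -(Δ₁ / Δ₃) * Cs k)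
    (hCeven : ∀ k, Even k → Cs (k + 1) = (1 / Δ₃) * Cs (k / 2) - (Δ₁ / Δ₃) * Cs k)
    (hDodd : ∀ k, Odd k → Ds (k + 1) = -(Δ₁ / Δ₃) * Ds k)
    (hDeven : ∀ k, Even k → Ds (k + 1) = Ds (k / 2) - (Δ₁ / Δ₃) * Ds k) :
    ∀ k : ℕ, |Cs k| ≤ |Cs 0| * (2 / Δ₃) ^ k ∧ |Ds k| ≤ |Ds 0| * (2 / Δ₃) ^ k := by
  have hr : 1 ≤ 2 / Δ₃ := by rw [le_div_iff₀ hΔ₃]; linarith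
  have hb : 0 ≤ Δ₁ / Δ₃ := by positivity
  have hC : 1 / Δ₃ + Δ₁ / Δ₃ ≤ 2 / Δ₃ := by rw [← add_div]; gcongr; linarith
  have hD : 1 + Δ₁ / Δ₃ ≤ 2 / Δ₃ := by
    rw [le_div_iff₀ hΔ₃, add_mul, div_mul_cancel₀ _ hΔ₃.ne']; linarith
  have hDeven' : ∀ k, Even k → Ds (k + 1) = 1 * Ds (k / 2) - (Δ₁ / Δ₃) * Ds k := by
    simpa only [one_mul] using hDeven
  intro k
  exact ⟨le_mul_pow_of_succ_le_mul_half_add_mul (u := fun n ↦ |Cs n|) (abs_nonneg _)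
      (by positivity) hb hr hC
      (abs_succ_le_of_parity_recursion (by positivity) hb hCodd hCeven) k,
    le_mul_pow_of_succ_le_mul_half_add_mul (u := fun n ↦ |Ds n|) (abs_nonneg _)
      zero_le_one hb hr hD
      (abs_succ_le_of_parity_recursion zero_le_one hb hDodd hDeven') k⟩

/-- The coefficients of the two-step asymptotic expansion, defined by
`C₀ = -Δ₂/Δ₃`, `D₀ = -Δ₁/Δ₃` and the parity recursions, grow at most like
`(2/Δ₃)^k`: `|C_k| ≤ |C₀|(2/Δ₃)^k` and `|D_k| ≤ |D₀|(2/Δ₃)^k`. -/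
theorem twoStep_coefficients_growth (Δ₁ Δ₂ Δ₃ : ℝ) (Cs Ds : ℕ → ℝ)
    (hΔ₁ : 0 < Δ₁) (hΔ₂ : 0 < Δ₂) (hΔ₃ : 0 < Δ₃)
    (htotal : Δ₁ + Δ₂ + Δ₃ = 1)
    (hC0 : Cs 0 = -(Δ₂ / Δ₃)) (hD0 : Ds 0 = -(Δ₁ / Δ₃))
    (hCodd : ∀ k, Odd k → Cs (k + 1) = -(Δ₁ / Δ₃) * Cs k)
    (hCeven : ∀ k, Even k → Cs (k + 1) = (1 / Δ₃) * Cs (k / 2) - (Δ₁ / Δ₃) * Cs k)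
    (hDodd : ∀ k, Odd k → Ds (k + 1) = -(Δ₁ / Δ₃) * Ds k)
    (hDeven : ∀ k, Even k → Ds (k + 1) = Ds (k / 2) - (Δ₁ / Δ₃) * Ds k) :
    ∀ k : ℕ, |Cs k| ≤ |Cs 0| * (2 / Δ₃) ^ k ∧ |Ds k| ≤ |Ds 0| * (2 / Δ₃) ^ k :=
  twoStep_coefficients_growth_general Δ₁ Δ₂ Δ₃ Cs Ds hΔ₁ hΔ₂ hΔ₃ htotal hCodd hCeven hDodd hDeven
end

section
/- Suppose 𝔈_1 : (Λ,∞) → ℝ satisfies 𝔈_1(2λ) = 𝔈_1(λ)(1 + (Δ_1/Δ_3)e^{−λ}) for all λ > Λ, together with the bound |𝔈_1(λ)| ≤ c e^{−λ} for λ > Λ, where Δ_1, Δ_3 ∈ (0,1), c > 0, and Λ > −2 ln Δ_3. Then 𝔈_1(λ) = 0 for all λ > Λ. -/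
/-!
Iterating the equation `E(2λ) = E(λ)(1 + (Δ₁/Δ₃)e^{-λ})`, whose multiplier is at least `1`, gives
`|E(λ)| ≤ |E(2ⁿλ)| ≤ c e^{-2ⁿλ}` for every `n`; letting `n → ∞` forces `E(λ) = 0`.
-/

open Real Filter Topology

theorem abs_le_abs_two_pow_mul {f : ℝ → ℝ} {Λ : ℝ} (hΛ : 0 ≤ Λ)
    (hf : ∀ x, Λ < x → |f x| ≤ |f (2 * x)|) (n : ℕ) {x : ℝ} (hx : Λ < x) :
    |f x| ≤ |f (2 ^ n * x)| := by
  induction n with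
  | zero => simp
  | succ n ih =>
    have hlt : Λ < 2 ^ n * x :=
      hx.trans_le (le_mul_of_one_le_left (hΛ.trans hx.le) (one_le_pow₀ one_le_two))
    calc |f x| ≤ |f (2 ^ n * x)| := ih
      _ ≤ |f (2 * (2 ^ n * x))| := hf _ hlt
      _ = |f (2 ^ (n + 1) * x)| := by rw [pow_succ', mul_assoc]

theorem eq_zero_of_abs_le_abs_two_mul {f g : ℝ → ℝ} {Λ : ℝ} (hΛ : 0 ≤ Λ)
    (hf : ∀ x, Λ < x → |f x| ≤ |f (2 * x)|) (hfg : ∀ x, Λ < x → |f x| ≤ g x)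
    (hg : Tendsto g atTop (𝓝 0)) {x : ℝ} (hx : Λ < x) : f x = 0 := by
  have hx0 : 0 < x := hΛ.trans_lt hx
  have hseq : Tendsto (fun n : ℕ => g (2 ^ n * x)) atTop (𝓝 0) :=
    hg.comp ((tendsto_pow_atTop_atTop_of_one_lt one_lt_two).atTop_mul_const hx0)
  have hbound (n : ℕ) : |f x| ≤ g (2 ^ n * x) :=
    (abs_le_abs_two_pow_mul hΛ hf n hx).trans <|
      hfg _ (hx.trans_le (le_mul_of_one_le_left hx0.le (one_le_pow₀ one_le_two)))
  exact abs_nonpos_iff.mp (ge_of_tendsto' hseq hbound)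

theorem homogeneous_equation_trivial_general (E₁ : ℝ → ℝ) (Δ₁ Δ₃ c Λ : ℝ)
    (hΔ₁ : Δ₁ ∈ Set.Ioo (0:ℝ) 1) (hΔ₃ : Δ₃ ∈ Set.Ioo (0:ℝ) 1)
    (hΛ : -2 * Real.log Δ₃ < Λ)
    (heq : ∀ lam : ℝ, Λ < lam →
      E₁ (2 * lam) = E₁ lam * (1 + (Δ₁ / Δ₃) * Real.exp (-lam)))
    (hbd : ∀ lam : ℝ, Λ < lam → |E₁ lam| ≤ c * Real.exp (-lam)) :
    ∀ lam : ℝ, Λ < lam → E₁ lam = 0 := by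
  have hΛ0 : 0 ≤ Λ := by
    have := Real.log_neg hΔ₃.1 hΔ₃.2
    linarith
  have hdouble : ∀ x, Λ < x → |E₁ x| ≤ |E₁ (2 * x)| := by
    intro x hx
    have hmul : 1 ≤ 1 + (Δ₁ / Δ₃) * exp (-x) :=
      le_add_of_nonneg_right (mul_nonneg (div_nonneg hΔ₁.1.le hΔ₃.1.le) (exp_pos _).le)
    rw [heq x hx, abs_mul]
    exact le_mul_of_one_le_right (abs_nonneg _) (hmul.trans (le_abs_self _))
  have hdecay : Tendsto (fun x => c * exp (-x)) atTop (𝓝 0) := by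
    simpa using tendsto_exp_neg_atTop_nhds_zero.const_mul c
  exact fun lam hlam => eq_zero_of_abs_le_abs_two_mul hΛ0 hdouble hbd hdecay hlam

/-- Uniqueness step: if `𝔈₁(2λ) = 𝔈₁(λ)(1 + (Δ₁/Δ₃)e^{-λ})` for `λ > Λ`,
`|𝔈₁(λ)| ≤ c e^{-λ}` for `λ > Λ`, with `Δ₁, Δ₃ ∈ (0,1)`, `c > 0` and
`Λ > -2 ln Δ₃`, then `𝔈₁` vanishes identically on `(Λ, ∞)`. -/
theorem homogeneous_equation_trivial (E₁ : ℝ → ℝ) (Δ₁ Δ₃ c Λ : ℝ)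
    (hΔ₁ : Δ₁ ∈ Set.Ioo (0:ℝ) 1) (hΔ₃ : Δ₃ ∈ Set.Ioo (0:ℝ) 1)
    (hc : 0 < c) (hΛ : -2 * Real.log Δ₃ < Λ)
    (heq : ∀ lam : ℝ, Λ < lam →
      E₁ (2 * lam) = E₁ lam * (1 + (Δ₁ / Δ₃) * Real.exp (-lam)))
    (hbd : ∀ lam : ℝ, Λ < lam → |E₁ lam| ≤ c * Real.exp (-lam)) :
    ∀ lam : ℝ, Λ < lam → E₁ lam = 0 :=
  homogeneous_equation_trivial_general E₁ Δ₁ Δ₃ c Λ hΔ₁ hΔ₃ hΛ heq hbd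
end
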